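/- arXiv:2006.15934 — 7 statements merged into one kernel-verified Lean document; each statement's English description precedes it below -/
import Mathlib

section
/- Fix N ∈ ℕ and real numbers r, R with 0 < r < R. Let z_1,…,z_N, w_1,…,w_N ∈ ℂ be such that |z_i| = R and |w_i| ≤ r for i = 1,…,N. Then |det [1/(z_i − w_j)]_{i,j=1}^N| ≤ R^{−N} · N^N · (r/R)^{N(N−1)/2} / (1 − r/R)^{N²}. -/
/-!
With `V` the Vandermonde matrix and `C = [1/(z_i - w_j)]`, Cauchy's determinant formula gives
`|det C| · ∏_{i,j} |z_i - w_j| = |det V(z)| · |det V(w)|`. To see it, let `A` be the coefficient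
matrix of the polynomials `∏_{k ≠ j} (X - w_k)`: then `V(z) A = diag(∏_k (z_i - w_k)) · C`, while
`V(w) A` is diagonal with entries `∏_{k ≠ j} (w_j - w_k)`, whose product has absolute value
`|det V(w)|²`.

Hadamard's inequality, i.e. AM-GM for the eigenvalues of `Mᴴ M` once the columns of `M` are
normalised, gives `|det V(v)| ≤ N^(N/2) ρ^(N(N-1)/2)` when all `|v_i| ≤ ρ`. Together with
`|z_i - w_j| ≥ R - r` this is the bound.
-/

open Finset Polynomial Lagrange
open scoped ComplexOrder

theorem Real.prod_le_one_of_sum_le_card {ι : Type*} [Fintype ι] {x : ι → ℝ}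
    (hx : ∀ i, 0 ≤ x i) (hsum : ∑ i, x i ≤ Fintype.card ι) : ∏ i, x i ≤ 1 :=
  calc ∏ i, x i ≤ ∏ i, Real.exp (x i - 1) :=
        prod_le_prod (fun i _ => hx i) fun i _ => by linarith [Real.add_one_le_exp (x i - 1)]
    _ = Real.exp (∑ i, x i - Fintype.card ι) := by
        rw [← Real.exp_sum, sum_sub_distrib, sum_const, card_univ, nsmul_one]
    _ ≤ 1 := Real.exp_le_one_iff.mpr (sub_nonpos.mpr hsum)

namespace Matrix

variable {n 𝕜 : Type*} [Fintype n] [DecidableEq n] [RCLike 𝕜]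

theorem norm_det_sq_le_one_of_sum_norm_sq_le_card (M : Matrix n n 𝕜)
    (hM : ∑ i, ∑ j, ‖M i j‖ ^ 2 ≤ Fintype.card n) : ‖M.det‖ ^ 2 ≤ 1 := by
  have hG := posSemidef_conjTranspose_mul_self M
  have hdet : ((‖M.det‖ ^ 2 : ℝ) : 𝕜) = ∏ k, (hG.1.eigenvalues k : 𝕜) := by
    rw [← hG.1.det_eq_prod_eigenvalues, det_mul, det_conjTranspose, RCLike.star_def,
      RCLike.conj_mul, RCLike.ofReal_pow]
  have htrace : ((∑ i, ∑ j, ‖M i j‖ ^ 2 : ℝ) : 𝕜) = ∑ k, (hG.1.eigenvalues k : 𝕜) := by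
    rw [← hG.1.trace_eq_sum_eigenvalues, trace, sum_comm]
    push_cast
    refine sum_congr rfl fun j _ => ?_
    simp only [diag_apply, mul_apply, conjTranspose_apply, RCLike.star_def, RCLike.conj_mul]
  rw [← RCLike.ofReal_prod, RCLike.ofReal_inj] at hdet
  rw [← RCLike.ofReal_sum, RCLike.ofReal_inj] at htrace
  rw [hdet]
  exact Real.prod_le_one_of_sum_le_card hG.eigenvalues_nonneg (htrace ▸ hM)

theorem norm_det_sq_le_prod_sum_norm_sq (M : Matrix n n 𝕜) :
    ‖M.det‖ ^ 2 ≤ ∏ j, ∑ i, ‖M i j‖ ^ 2 := by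
  set c : n → ℝ := fun j => ∑ i, ‖M i j‖ ^ 2
  have hc : ∀ j, 0 ≤ c j := fun j => sum_nonneg fun i _ => by positivity
  by_cases! hzero : ∃ j, c j = 0
  · obtain ⟨j, hj⟩ := hzero
    have hcol : ∀ i, M i j = 0 := fun i => by
      simpa using (sum_eq_zero_iff_of_nonneg fun i _ => by positivity).mp hj i (mem_univ i)
    rw [det_eq_zero_of_column_eq_zero j hcol, norm_zero, zero_pow two_ne_zero]
    exact prod_nonneg fun j _ => hc j
  have hcpos : ∀ j, 0 < c j := fun j => (hc j).lt_of_ne' (hzero j)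
  set d : n → ℝ := fun j => (√(c j))⁻¹
  have hd : ∀ j, d j ^ 2 * c j = 1 := fun j => by
    rw [inv_pow, Real.sq_sqrt (hc j), inv_mul_cancel₀ (hzero j)]
  have hunit : ‖(M * diagonal fun j => (d j : 𝕜)).det‖ ^ 2 ≤ 1 := by
    refine norm_det_sq_le_one_of_sum_norm_sq_le_card _ ?_
    have hcol : ∀ j, ∑ i, ‖(M * diagonal fun j => (d j : 𝕜)) i j‖ ^ 2 = 1 := fun j => by
      simp only [mul_diagonal, norm_mul, RCLike.norm_ofReal, mul_pow, sq_abs, ← sum_mul]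
      rw [mul_comm]
      exact hd j
    rw [sum_comm, sum_congr rfl fun j _ => hcol j, sum_const, card_univ, nsmul_one]
  have hscale : ‖(M * diagonal fun j => (d j : 𝕜)).det‖ ^ 2 = ‖M.det‖ ^ 2 * (∏ j, c j)⁻¹ := by
    rw [det_mul, det_diagonal, norm_mul, mul_pow, norm_prod, ← prod_pow, ← prod_inv_distrib]
    congr 1
    refine prod_congr rfl fun j _ => ?_
    rw [RCLike.norm_ofReal, sq_abs, eq_inv_of_mul_eq_one_left (hd j)]
  rw [hscale, ← div_eq_mul_inv, div_le_one (prod_pos fun j _ => hcpos j)] at hunit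
  exact hunit

theorem norm_det_vandermonde_le {N : ℕ} {v : Fin N → 𝕜} {ρ : ℝ} (hρ : 0 ≤ ρ)
    (hv : ∀ i, ‖v i‖ ≤ ρ) : ‖(vandermonde v).det‖ ≤ √N ^ N * ρ ^ (N * (N - 1) / 2) := by
  have hcol : ∀ j : Fin N, ∑ i, ‖vandermonde v i j‖ ^ 2 ≤ (√N * ρ ^ (j : ℕ)) ^ 2 := fun j =>
    calc ∑ i, ‖vandermonde v i j‖ ^ 2 ≤ ∑ _i : Fin N, (ρ ^ (j : ℕ)) ^ 2 :=
          sum_le_sum fun i _ => by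
            rw [vandermonde_apply, norm_pow]
            gcongr
            exact hv i
      _ = (√N * ρ ^ (j : ℕ)) ^ 2 := by simp [mul_pow]
  have hsq : ‖(vandermonde v).det‖ ^ 2 ≤ (√N ^ N * ρ ^ (N * (N - 1) / 2)) ^ 2 :=
    calc ‖(vandermonde v).det‖ ^ 2 ≤ ∏ j, ∑ i, ‖vandermonde v i j‖ ^ 2 :=
          norm_det_sq_le_prod_sum_norm_sq _
      _ ≤ ∏ j : Fin N, (√N * ρ ^ (j : ℕ)) ^ 2 :=
          prod_le_prod (fun j _ => sum_nonneg fun i _ => by positivity) fun j _ => hcol j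
      _ = (√N ^ N * ρ ^ (N * (N - 1) / 2)) ^ 2 := by
          rw [prod_pow, prod_mul_distrib, prod_const, prod_pow_eq_pow_sum,
            Fin.sum_univ_eq_sum_range (fun j => j), sum_range_id, card_univ, Fintype.card_fin]
  exact (pow_le_pow_iff_left₀ (norm_nonneg _) (by positivity) two_ne_zero).mp hsq

theorem vandermonde_mul_coeff_eq_eval {R : Type*} [CommRing R] {n : ℕ} (v : Fin n → R)
    (p : Fin n → R[X]) (hp : ∀ j, (p j).natDegree < n) :
    vandermonde v * of (fun (k j : Fin n) => (p j).coeff k) = of fun i j => (p j).eval (v i) := by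
  ext i j
  rw [mul_apply, of_apply, eval_eq_sum_range' (hp j), ← Fin.sum_univ_eq_sum_range]
  exact sum_congr rfl fun k _ => by rw [vandermonde_apply, of_apply, mul_comm]

section Cauchy

variable {K : Type*} {N : ℕ}

noncomputable def nodalCoeffMatrix [CommRing K] (w : Fin N → K) : Matrix (Fin N) (Fin N) K :=
  of fun k j => (nodal (univ.erase j) w).coeff k

theorem vandermonde_mul_nodalCoeffMatrix [CommRing K] [Nontrivial K] (v w : Fin N → K) :
    vandermonde v * nodalCoeffMatrix w = of fun i j => (nodal (univ.erase j) w).eval (v i) := by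
  refine vandermonde_mul_coeff_eq_eval v _ fun j => ?_
  rw [natDegree_nodal, card_erase_of_mem (mem_univ j), card_univ, Fintype.card_fin]
  exact Nat.sub_lt j.pos one_pos

section Field

variable [Field K]

theorem det_vandermonde_mul_det_nodalCoeffMatrix_eq_of_ne (z w : Fin N → K)
    (hzw : ∀ i j, z i ≠ w j) :
    (vandermonde z).det * (nodalCoeffMatrix w).det =
      (∏ i, ∏ j, (z i - w j)) * (of fun i j => (z i - w j)⁻¹).det := by
  have hfactor : (of fun i j => (nodal (univ.erase j) w).eval (z i)) =
      diagonal (fun i => ∏ j, (z i - w j)) * of fun i j => (z i - w j)⁻¹ := by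
    ext i j
    rw [diagonal_mul, of_apply, of_apply, eval_nodal, ← mul_prod_erase univ _ (mem_univ j),
      mul_comm (z i - w j), mul_assoc, mul_inv_cancel₀ (sub_ne_zero.mpr (hzw i j)), mul_one]
  rw [← det_mul, vandermonde_mul_nodalCoeffMatrix, hfactor, det_mul, det_diagonal]

theorem det_vandermonde_mul_det_nodalCoeffMatrix_self (w : Fin N → K) :
    (vandermonde w).det * (nodalCoeffMatrix w).det = ∏ j, ∏ k ∈ univ.erase j, (w j - w k) := by
  have hdiag : (of fun i j => (nodal (univ.erase j) w).eval (w i)) =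
      diagonal fun j => ∏ k ∈ univ.erase j, (w j - w k) := by
    ext i j
    rcases eq_or_ne i j with rfl | hij
    · rw [of_apply, diagonal_apply_eq, eval_nodal]
    · rw [of_apply, diagonal_apply_ne _ hij, eval_nodal_at_node (mem_erase.mpr ⟨hij, mem_univ i⟩)]
  rw [← det_mul, vandermonde_mul_nodalCoeffMatrix, hdiag, det_diagonal]

end Field

variable [NormedField K]

theorem prod_prod_erase_norm_sub_eq_norm_det_vandermonde_sq (w : Fin N → K) :
    ∏ j, ∏ k ∈ univ.erase j, ‖w j - w k‖ = ‖(vandermonde w).det‖ ^ 2 := by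
  have hdet : ‖(vandermonde w).det‖ = ∏ j, ∏ k ∈ Ioi j, ‖w k - w j‖ := by
    simp_rw [det_vandermonde, norm_prod]
  have hswap : ∏ j, ∏ k ∈ Iio j, ‖w j - w k‖ = ∏ k, ∏ j ∈ Ioi k, ‖w j - w k‖ :=
    prod_comm' fun j k => by simp
  have hrev : ∏ j, ∏ k ∈ Ioi j, ‖w j - w k‖ = ∏ j, ∏ k ∈ Ioi j, ‖w k - w j‖ :=
    prod_congr rfl fun j _ => prod_congr rfl fun k _ => norm_sub_rev _ _
  simp_rw [← compl_singleton, ← Ioi_disjUnion_Iio, prod_disjUnion, prod_mul_distrib]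
  rw [hswap, hrev, hdet, sq]

theorem norm_det_cauchy_mul_prod_norm_sub (z w : Fin N → K) (hzw : ∀ i j, z i ≠ w j) :
    ‖(of fun i j => (z i - w j)⁻¹).det‖ * ∏ i, ∏ j, ‖z i - w j‖ =
      ‖(vandermonde z).det‖ * ‖(vandermonde w).det‖ := by
  by_cases! hw : ¬Function.Injective w
  · obtain ⟨i, j, hij, hne⟩ := Function.not_injective_iff.mp hw
    have hcauchy : (of fun i j => (z i - w j)⁻¹).det = 0 :=
      det_zero_of_column_eq hne fun k => by simp [hij]
    have hvandermonde : (vandermonde w).det = 0 := det_vandermonde_eq_zero_iff.mpr ⟨i, j, hij, hne⟩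
    simp [hcauchy, hvandermonde]
  have hself := congrArg norm (det_vandermonde_mul_det_nodalCoeffMatrix_self w)
  simp_rw [norm_mul, norm_prod, prod_prod_erase_norm_sub_eq_norm_det_vandermonde_sq, sq] at hself
  have hnodal : ‖(nodalCoeffMatrix w).det‖ = ‖(vandermonde w).det‖ :=
    mul_left_cancel₀ (norm_ne_zero_iff.mpr (det_vandermonde_ne_zero_iff.mpr hw)) hself
  have hz := congrArg norm (det_vandermonde_mul_det_nodalCoeffMatrix_eq_of_ne z w hzw)
  simp_rw [norm_mul, norm_prod, hnodal] at hz
  rw [hz, mul_comm]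

end Cauchy

end Matrix

theorem stmt0 (N : ℕ) (r R : ℝ) (hr : 0 < r) (hrR : r < R)
    (z w : Fin N → ℂ)
    (hz : ∀ i, ‖z i‖ = R) (hw : ∀ i, ‖w i‖ ≤ r) :
    ‖Matrix.det (Matrix.of fun i j => (z i - w j)⁻¹)‖ ≤
      R ^ (-(N : ℤ)) * (N : ℝ) ^ N * (r / R) ^ (N * (N - 1) / 2) / (1 - r / R) ^ (N ^ 2) := by
  have hR : 0 < R := hr.trans hrR
  have hgap : ∀ i j, R - r ≤ ‖z i - w j‖ := fun i j => by
    linarith [norm_sub_norm_le (z i) (w j), hz i, hw j]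
  have hzw : ∀ i j, z i ≠ w j := fun i j h => by
    linarith [hgap i j, show ‖z i - w j‖ = 0 by simp [h]]
  set e := N * (N - 1) / 2
  set d := ‖(Matrix.of fun i j => (z i - w j)⁻¹).det‖
  have hprod : (R - r) ^ (N ^ 2) ≤ ∏ i, ∏ j, ‖z i - w j‖ :=
    calc (R - r) ^ (N ^ 2) = ∏ _i : Fin N, ∏ _j : Fin N, (R - r) := by simp [sq, pow_mul]
      _ ≤ ∏ i, ∏ j, ‖z i - w j‖ :=
        prod_le_prod (fun _ _ => prod_nonneg fun _ _ => sub_nonneg.mpr hrR.le) fun i _ =>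
          prod_le_prod (fun _ _ => sub_nonneg.mpr hrR.le) fun j _ => hgap i j
  have hbound : d * (R - r) ^ (N ^ 2) ≤ N ^ N * R ^ e * r ^ e :=
    calc d * (R - r) ^ (N ^ 2) ≤ d * ∏ i, ∏ j, ‖z i - w j‖ :=
          mul_le_mul_of_nonneg_left hprod (norm_nonneg _)
      _ = ‖(Matrix.vandermonde z).det‖ * ‖(Matrix.vandermonde w).det‖ :=
        Matrix.norm_det_cauchy_mul_prod_norm_sub z w hzw
      _ ≤ (√N ^ N * R ^ e) * (√N ^ N * r ^ e) :=
        mul_le_mul (Matrix.norm_det_vandermonde_le hR.le fun i => (hz i).le)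
          (Matrix.norm_det_vandermonde_le hr.le hw) (norm_nonneg _) (by positivity)
      _ = N ^ N * R ^ e * r ^ e := by
        rw [mul_mul_mul_comm, ← mul_pow, Real.mul_self_sqrt N.cast_nonneg, mul_assoc]
  have hexp : N ^ 2 = 2 * e + N := by
    rw [Nat.two_mul_div_two_of_even (Nat.even_mul_pred_self N)]
    rcases N with _ | n
    · rfl
    · rw [Nat.add_sub_cancel]
      ring
  have hrhs : R ^ (-(N : ℤ)) * (N : ℝ) ^ N * (r / R) ^ e / (1 - r / R) ^ (N ^ 2) =
      N ^ N * R ^ e * r ^ e / (R - r) ^ (N ^ 2) := by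
    rw [zpow_neg, zpow_natCast, one_sub_div hR.ne', div_pow, div_pow, hexp]
    field_simp
    ring
  rw [hrhs, le_div_iff₀ (pow_pos (sub_pos.mpr hrR) _)]
  exact hbound
end

section
/- Let t ∈ (0,1). There exists a constant C > 0, depending on t alone, such that for every real U with 0 < U ≤ (−log t)/4 and every z ∈ ℂ with Re(z) ∈ [U, (−log t)/2], one has Σ_{k∈ℤ} 1/|sin(−π·(z + 2πik)/(−log t))| ≤ C/U. -/
open Real

/-! With `L = -log t` and `d = 2π² / L`, the argument of the sine is `w - i d k` where
`w = -π z / L`. Since `‖sin ζ‖² = sin² (Re ζ) + sinh² (Im ζ)`, every term is at most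
`1 / |sin (π Re z / L)| ≤ L / (2U)` by Jordan's inequality. Apart from the one index `k₀` for which
`Im w - d k` is closest to `0`, the terms are also at most `1 / sinh |Im w - d k|`, which decays
geometrically in `|k - k₀|`; so the sum is at most `L / (2U) + K` with `K` depending on `d` only,
and `U ≤ L / 4` turns this into `C / U`. -/

lemma Complex.normSq_sin (z : ℂ) :
    Complex.normSq (Complex.sin z) = Real.sin z.re ^ 2 + Real.sinh z.im ^ 2 := by
  conv_lhs => rw [← Complex.re_add_im z, Complex.sin_add_mul_I]
  rw [← Complex.ofReal_sin, ← Complex.ofReal_cosh, ← Complex.ofReal_cos, ← Complex.ofReal_sinh,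
    ← Complex.ofReal_mul, ← Complex.ofReal_mul, Complex.normSq_add_mul_I]
  nlinarith [Real.cosh_sq z.im, Real.sin_sq_add_cos_sq z.re]

lemma Complex.abs_sin_re_le_norm_sin (z : ℂ) : |Real.sin z.re| ≤ ‖Complex.sin z‖ := by
  rw [← Real.sqrt_sq (norm_nonneg _), Complex.sq_norm, Complex.normSq_sin]
  exact Real.abs_le_sqrt (le_add_of_nonneg_right (sq_nonneg _))

lemma Complex.sinh_abs_im_le_norm_sin (z : ℂ) : Real.sinh |z.im| ≤ ‖Complex.sin z‖ := by
  rw [← Real.sqrt_sq (norm_nonneg _), Complex.sq_norm, Complex.normSq_sin, ← Real.abs_sinh]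
  exact Real.abs_le_sqrt (le_add_of_nonneg_left (sq_nonneg _))

lemma Real.sinh_mul_exp_sub_le_sinh {c y : ℝ} (hcy : c ≤ y) :
    sinh c * exp (y - c) ≤ sinh y := by
  have hs : 0 ≤ sinh (y - c) := Real.sinh_nonneg_iff.mpr (sub_nonneg.mpr hcy)
  have hsc : sinh c ≤ cosh c := (Real.sinh_lt_cosh c).le
  calc sinh c * exp (y - c) = sinh c * cosh (y - c) + sinh c * sinh (y - c) := by
        rw [← Real.cosh_add_sinh, mul_add]
    _ ≤ sinh c * cosh (y - c) + cosh c * sinh (y - c) := by gcongr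
    _ = sinh y := by rw [← Real.sinh_add, add_sub_cancel]

lemma Real.inv_sinh_le_mul_exp_neg {c y : ℝ} (hc : 0 < c) (hcy : c ≤ y) :
    (sinh y)⁻¹ ≤ exp c / sinh c * exp (-y) := by
  have hsc : 0 < sinh c := Real.sinh_pos_iff.mpr hc
  calc (sinh y)⁻¹ ≤ (sinh c * exp (y - c))⁻¹ :=
        inv_anti₀ (by positivity) (Real.sinh_mul_exp_sub_le_sinh hcy)
    _ = exp c / sinh c * exp (-y) := by
        rw [mul_inv, ← Real.exp_neg, neg_sub, sub_eq_add_neg, Real.exp_add]; ring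

lemma Real.two_mul_div_le_sin_pi_mul_div {L x : ℝ} (hL : 0 < L) (hx0 : 0 ≤ x) (hx : x ≤ L / 2) :
    2 * x / L ≤ sin (π * x / L) := by
  have hxπ : π * x / L ≤ π / 2 := by
    rw [div_le_iff₀ hL]; nlinarith [pi_pos]
  calc 2 * x / L = 2 / π * (π * x / L) := by field_simp
    _ ≤ sin (π * x / L) := mul_le_sin (by positivity) hxπ

lemma abs_add_mul_intCast_ge (a : ℝ) {d : ℝ} (hd : d ≠ 0) (k : ℤ) :
    |d| * |(k : ℝ) - round (-a / d)| - |d| / 2 ≤ |a + d * k| := by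
  have hround := abs_sub_round (-a / d)
  have hsplit : a + d * k = d * ((k - round (-a / d)) - (-a / d - round (-a / d))) := by
    field_simp; ring
  have htri := abs_sub_abs_le_abs_sub ((k : ℝ) - round (-a / d)) (-a / d - round (-a / d))
  rw [hsplit, abs_mul]
  nlinarith [abs_nonneg d]

lemma summable_pow_natAbs {r : ℝ} (h0 : 0 ≤ r) (h1 : r < 1) :
    Summable (fun j : ℤ => r ^ j.natAbs) :=
  Summable.of_nat_of_neg (by simpa using summable_geometric_of_lt_one h0 h1)
    (by simpa using summable_geometric_of_lt_one h0 h1)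

lemma summable_and_tsum_le_of_le_off_single {ι : Type*} [DecidableEq ι] {f g : ι → ℝ} {i₀ : ι}
    {M : ℝ} (hf : ∀ i, 0 ≤ f i) (hg : ∀ i, 0 ≤ g i) (hgs : Summable g) (hM : f i₀ ≤ M)
    (hfg : ∀ i ≠ i₀, f i ≤ g i) :
    Summable f ∧ ∑' i, f i ≤ M + ∑' i, g i := by
  have hle : ∀ i, f i ≤ (Pi.single i₀ M : ι → ℝ) i + g i := by
    intro i
    by_cases hi : i = i₀
    · subst hi; simpa using le_add_of_le_of_nonneg hM (hg i)
    · simpa [hi] using hfg i hi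
  have hsum := (hasSum_pi_single i₀ M).add hgs.hasSum
  have hfs : Summable f := hsum.summable.of_nonneg_of_le hf hle
  exact ⟨hfs, hasSum_le hle hfs.hasSum hsum⟩

lemma Complex.inv_norm_sin_add_mul_I_le (w : ℂ) {d : ℝ} (hd : d ≠ 0) {k : ℤ}
    (hk : k ≠ round (-w.im / d)) :
    ‖Complex.sin (w + (d * k : ℝ) * Complex.I)‖⁻¹ ≤
      Real.exp |d| / Real.sinh (|d| / 2) * Real.exp (-|d|) ^ (k - round (-w.im / d)).natAbs := by
  set m := (k - round (-w.im / d)).natAbs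
  have hm : (1 : ℝ) ≤ m := by
    exact_mod_cast Nat.one_le_iff_ne_zero.mpr (Int.natAbs_ne_zero.mpr (sub_ne_zero.mpr hk))
  have hmk : (m : ℝ) = |(k : ℝ) - round (-w.im / d)| := by
    rw [Nat.cast_natAbs, Int.cast_abs, Int.cast_sub]
  have him : (w + (d * k : ℝ) * Complex.I).im = w.im + d * k := by simp
  have hy := abs_add_mul_intCast_ge w.im hd k
  rw [← hmk] at hy
  have hd0 : 0 < |d| := abs_pos.mpr hd
  have hhalf : |d| / 2 ≤ |w.im + d * k| := by nlinarith
  calc ‖Complex.sin (w + (d * k : ℝ) * Complex.I)‖⁻¹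
      ≤ (Real.sinh |w.im + d * k|)⁻¹ := by
        refine inv_anti₀ (Real.sinh_pos_iff.mpr (by linarith)) ?_
        simpa only [him] using Complex.sinh_abs_im_le_norm_sin (w + (d * k : ℝ) * Complex.I)
    _ ≤ Real.exp (|d| / 2) / Real.sinh (|d| / 2) * Real.exp (-|w.im + d * k|) :=
        Real.inv_sinh_le_mul_exp_neg (by positivity) hhalf
    _ ≤ Real.exp (|d| / 2) / Real.sinh (|d| / 2) * Real.exp (|d| / 2 - |d| * m) := by
        have : 0 < Real.sinh (|d| / 2) := Real.sinh_pos_iff.mpr (by positivity)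
        gcongr
        linarith
    _ = Real.exp |d| / Real.sinh (|d| / 2) * Real.exp (-|d|) ^ m := by
        rw [← Real.exp_nat_mul, div_mul_eq_mul_div, div_mul_eq_mul_div, ← Real.exp_add,
          ← Real.exp_add]
        ring_nf

theorem Complex.exists_tsum_inv_norm_sin_add_mul_I_le {d : ℝ} (hd : d ≠ 0) :
    ∃ K ≥ 0, ∀ w : ℂ, Real.sin w.re ≠ 0 →
      Summable (fun k : ℤ => ‖Complex.sin (w + (d * k : ℝ) * Complex.I)‖⁻¹) ∧
      ∑' k : ℤ, ‖Complex.sin (w + (d * k : ℝ) * Complex.I)‖⁻¹ ≤ |Real.sin w.re|⁻¹ + K := by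
  set B := Real.exp |d| / Real.sinh (|d| / 2)
  have hB : 0 ≤ B := div_nonneg (Real.exp_pos _).le (Real.sinh_nonneg_iff.mpr (by positivity))
  have hr : Real.exp (-|d|) < 1 := Real.exp_lt_one_iff.mpr (neg_lt_zero.mpr (abs_pos.mpr hd))
  have hgeom := summable_pow_natAbs (Real.exp_pos (-|d|)).le hr
  refine ⟨B * ∑' j : ℤ, Real.exp (-|d|) ^ j.natAbs,
    mul_nonneg hB (tsum_nonneg fun _ => by positivity), fun w hw => ?_⟩
  set k₀ := round (-w.im / d)
  have hshift : Summable (fun k : ℤ => Real.exp (-|d|) ^ (k - k₀).natAbs) :=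
    hgeom.comp_injective (sub_left_injective (b := k₀))
  have hre : (w + (d * k₀ : ℝ) * Complex.I).re = w.re := by simp
  have hM : ‖Complex.sin (w + (d * k₀ : ℝ) * Complex.I)‖⁻¹ ≤ |Real.sin w.re|⁻¹ := by
    refine inv_anti₀ (abs_pos.mpr hw) ?_
    simpa only [hre] using Complex.abs_sin_re_le_norm_sin (w + (d * k₀ : ℝ) * Complex.I)
  have key := summable_and_tsum_le_of_le_off_single
    (f := fun k : ℤ => ‖Complex.sin (w + (d * k : ℝ) * Complex.I)‖⁻¹)
    (fun _ => inv_nonneg.mpr (norm_nonneg _)) (fun _ => by positivity) (hshift.mul_left B)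
    hM (fun k hk => Complex.inv_norm_sin_add_mul_I_le w hd hk)
  have hshift_tsum :
      ∑' k : ℤ, Real.exp (-|d|) ^ (k - k₀).natAbs = ∑' j : ℤ, Real.exp (-|d|) ^ j.natAbs :=
    (Equiv.subRight k₀).tsum_eq (fun j : ℤ => Real.exp (-|d|) ^ j.natAbs)
  rwa [tsum_mul_left, hshift_tsum] at key

theorem stmt3 (t : ℝ) (ht : t ∈ Set.Ioo (0:ℝ) 1) :
    ∃ C > 0, ∀ U : ℝ, 0 < U → U ≤ (-Real.log t) / 4 →
      ∀ z : ℂ, z.re ∈ Set.Icc U ((-Real.log t) / 2) →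
        Summable (fun k : ℤ =>
          (‖Complex.sin (-(Real.pi : ℂ) *
            (z + 2 * (Real.pi : ℂ) * Complex.I * (k : ℂ)) / (-(Real.log t : ℂ)))‖)⁻¹) ∧
        (∑' k : ℤ,
          (‖Complex.sin (-(Real.pi : ℂ) *
            (z + 2 * (Real.pi : ℂ) * Complex.I * (k : ℂ)) / (-(Real.log t : ℂ)))‖)⁻¹) ≤ C / U := by
  set L := -Real.log t with hL_def
  have hL : 0 < L := neg_pos.mpr (Real.log_neg ht.1 ht.2)
  obtain ⟨K, hK, hsum⟩ := Complex.exists_tsum_inv_norm_sin_add_mul_I_le (d := -(2 * π ^ 2 / L))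
    (neg_ne_zero.mpr (by positivity))
  refine ⟨L / 2 + K * L / 4, by positivity, fun U hU hUL z hz => ?_⟩
  have harg : ∀ k : ℤ, -(π : ℂ) * (z + 2 * π * Complex.I * k) / (-(Real.log t : ℂ)) =
      -(π : ℂ) * z / L + ((-(2 * π ^ 2 / L)) * k : ℝ) * Complex.I := by
    intro k
    have : (L : ℂ) ≠ 0 := by exact_mod_cast hL.ne'
    rw [hL_def]
    push_cast
    field_simp
  have hre : (-(π : ℂ) * z / L).re = -(π * z.re / L) := by
    simp [Complex.div_ofReal_re]; ring
  have hjordan : 2 * U / L ≤ |Real.sin (-(π : ℂ) * z / L).re| := by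
    rw [hre, Real.sin_neg, abs_neg]
    calc 2 * U / L ≤ 2 * z.re / L := by gcongr; exact hz.1
      _ ≤ Real.sin (π * z.re / L) := Real.two_mul_div_le_sin_pi_mul_div hL (hU.le.trans hz.1) hz.2
      _ ≤ _ := le_abs_self _
  simp only [harg]
  obtain ⟨hs, hle⟩ := hsum _ (abs_pos.mp (lt_of_lt_of_le (by positivity) hjordan))
  refine ⟨hs, hle.trans ?_⟩
  have hLU : 1 ≤ L / (4 * U) := by rw [le_div_iff₀ (by positivity)]; linarith
  calc |Real.sin (-(π : ℂ) * z / L).re|⁻¹ + K ≤ L / (2 * U) + K * (L / (4 * U)) := by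
        gcongr
        · exact (inv_anti₀ (by positivity) hjordan).trans_eq (inv_div _ _)
        · exact le_mul_of_one_le_right hK hLU
    _ = (L / 2 + K * L / 4) / U := by field_simp
end

section
/- Let t ∈ (0,1). There exists a constant C > 0, depending on t alone, such that the following holds: for all u, U ∈ (0,1) with 0 < u < U < min(1, (−log t)/10) and all z, w ∈ ℂ with Re(w) ∈ [−U, 0] and Re(z) ∈ [u, U], one has (i) 1/|e^z − e^w| ≤ C·u^{−1}, and (ii) Σ_{k∈ℤ} 1/|sin(−π·[(w − z)/log t − 2πik/log t])| ≤ C·u^{−1}. -/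
/-!
With `P = π / (-log t)` the sine argument is `P (w - z) - 2πP k i`, whose real part `x` satisfies
`P u ≤ |x| ≤ 2 P U < π / 5`. From `|sin (x + i y)| ≥ |sin x| cosh y ≥ |sin x| e^{|y|} / 2` and
Jordan's inequality `|sin x| ≥ 2 |x| / π`, the `k`-th term is at most a multiple of
`e^{-|y - 2πP k|} / u`, and `∑ₖ e^{-|y - c k|}` is bounded uniformly in `y` after centring the
sum at the integer nearest to `y / c`. Part (i) is `|e^z| ≥ e^u ≥ 1 + u` against `|e^w| ≤ 1`.
-/

open Real

namespace Complex

theorem re_sin (z : ℂ) : (sin z).re = Real.sin z.re * Real.cosh z.im := by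
  conv_lhs => rw [← re_add_im z]
  rw [sin_add, sin_mul_I, cos_mul_I, ← ofReal_sin, ← ofReal_cos, ← ofReal_sinh, ← ofReal_cosh]
  simp only [add_re, mul_re, ofReal_re, ofReal_im, I_re, I_im, mul_im]
  ring

theorem abs_sin_re_mul_cosh_im_le_norm_sin (z : ℂ) :
    |Real.sin z.re| * Real.cosh z.im ≤ ‖sin z‖ := by
  simpa [re_sin, abs_mul, abs_of_pos (cosh_pos z.im)] using abs_re_le_norm (sin z)

theorem inv_norm_sin_le (z : ℂ) (hz : Real.sin z.re ≠ 0) :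
    ‖sin z‖⁻¹ ≤ 2 * Real.exp (-|z.im|) / |Real.sin z.re| := by
  have hs : 0 < |Real.sin z.re| := abs_pos.mpr hz
  have hcosh : Real.exp |z.im| / 2 ≤ Real.cosh z.im := by
    rw [cosh_eq]; linarith [exp_abs_le z.im]
  have hnorm : |Real.sin z.re| * (Real.exp |z.im| / 2) ≤ ‖sin z‖ :=
    (mul_le_mul_of_nonneg_left hcosh hs.le).trans (abs_sin_re_mul_cosh_im_le_norm_sin z)
  calc ‖sin z‖⁻¹ ≤ (|Real.sin z.re| * (Real.exp |z.im| / 2))⁻¹ :=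
        inv_anti₀ (by positivity) hnorm
    _ = 2 * Real.exp (-|z.im|) / |Real.sin z.re| := by
        rw [Real.exp_neg]; field_simp

end Complex

namespace Real

theorem summable_exp_neg_mul_abs_int {c : ℝ} (hc : 0 < c) :
    Summable fun k : ℤ => exp (-(c * |k|)) := by
  have h : Summable fun n : ℕ => exp (-(c * n)) :=
    (summable_exp_nat_mul_iff.mpr (neg_lt_zero.mpr hc)).congr fun n => by ring_nf
  exact .of_nat_of_neg (by simpa using h) (by simpa using h)

theorem exp_neg_abs_sub_mul_le (y : ℝ) {c : ℝ} (hc : 0 < c) (k : ℤ) :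
    exp (-|y - c * k|) ≤ exp (c / 2) * exp (-(c * |k - round (y / c)|)) := by
  rw [← exp_add, exp_le_exp]
  have hround : |y / c - round (y / c)| ≤ 1 / 2 := abs_sub_round (y / c)
  have htri : |(k : ℝ) - round (y / c)| ≤ |y / c - k| + |y / c - round (y / c)| := by
    simpa [abs_sub_comm] using abs_sub_le (k : ℝ) (y / c) (round (y / c))
  have hyc : |y - c * k| = c * |y / c - k| := by
    rw [← abs_of_pos hc, ← abs_mul, abs_of_pos hc, mul_sub, mul_div_cancel₀ _ hc.ne']
  push_cast
  rw [hyc]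
  nlinarith

theorem summable_exp_neg_mul_abs_sub_int {c : ℝ} (hc : 0 < c) (m : ℤ) :
    Summable fun k : ℤ => exp (-(c * |k - m|)) := by
  simpa [Function.comp_def] using
    (summable_exp_neg_mul_abs_int hc).comp_injective (Equiv.subRight m).injective

theorem summable_exp_neg_abs_sub_mul_int (y : ℝ) {c : ℝ} (hc : 0 < c) :
    Summable fun k : ℤ => exp (-|y - c * k|) :=
  .of_nonneg_of_le (fun _ => (exp_pos _).le) (exp_neg_abs_sub_mul_le y hc)
    ((summable_exp_neg_mul_abs_sub_int hc _).mul_left _)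

theorem tsum_exp_neg_abs_sub_mul_int_le (y : ℝ) {c : ℝ} (hc : 0 < c) :
    ∑' k : ℤ, exp (-|y - c * k|) ≤ exp (c / 2) * ∑' k : ℤ, exp (-(c * |k|)) := by
  set m := round (y / c)
  have hshift : ∑' k : ℤ, exp (-(c * |k - m|)) = ∑' k : ℤ, exp (-(c * |k|)) := by
    simpa using (Equiv.subRight m).tsum_eq fun k : ℤ => exp (-(c * |k|))
  calc ∑' k : ℤ, exp (-|y - c * k|) ≤ ∑' k : ℤ, exp (c / 2) * exp (-(c * |k - m|)) :=
        (summable_exp_neg_abs_sub_mul_int y hc).tsum_le_tsum (exp_neg_abs_sub_mul_le y hc)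
          ((summable_exp_neg_mul_abs_sub_int hc m).mul_left _)
    _ = exp (c / 2) * ∑' k : ℤ, exp (-(c * |k|)) := by rw [tsum_mul_left, hshift]

end Real

namespace Complex

theorem summable_inv_norm_sin_sub_mul_I_and_tsum_le (ζ : ℂ) (hζ : Real.sin ζ.re ≠ 0) {c : ℝ}
    (hc : 0 < c) :
    Summable (fun k : ℤ => ‖sin (ζ - c * k * I)‖⁻¹) ∧
      ∑' k : ℤ, ‖sin (ζ - c * k * I)‖⁻¹ ≤
        2 * Real.exp (c / 2) * (∑' k : ℤ, Real.exp (-(c * |k|))) / |Real.sin ζ.re| := by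
  have hbound (k : ℤ) : ‖sin (ζ - c * k * I)‖⁻¹ ≤
      2 / |Real.sin ζ.re| * Real.exp (-|ζ.im - c * k|) := by
    have := inv_norm_sin_le (ζ - c * k * I) (by simpa using hζ)
    simp only [sub_re, sub_im, mul_re, mul_im, ofReal_re, ofReal_im, intCast_re, intCast_im,
      I_re, I_im] at this
    convert this using 1; ring_nf
  have hdom := (Real.summable_exp_neg_abs_sub_mul_int ζ.im hc).mul_left (2 / |Real.sin ζ.re|)
  have hsum : Summable (fun k : ℤ => ‖sin (ζ - c * k * I)‖⁻¹) :=
    .of_nonneg_of_le (fun _ => by positivity) hbound hdom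
  refine ⟨hsum, ?_⟩
  calc ∑' k : ℤ, ‖sin (ζ - c * k * I)‖⁻¹
      ≤ ∑' k : ℤ, 2 / |Real.sin ζ.re| * Real.exp (-|ζ.im - c * k|) :=
        hsum.tsum_le_tsum hbound hdom
    _ = 2 / |Real.sin ζ.re| * ∑' k : ℤ, Real.exp (-|ζ.im - c * k|) := tsum_mul_left
    _ ≤ 2 / |Real.sin ζ.re| * (Real.exp (c / 2) * ∑' k : ℤ, Real.exp (-(c * |k|))) := by
        gcongr; exact Real.tsum_exp_neg_abs_sub_mul_int_le ζ.im hc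
    _ = _ := by ring

theorem summable_inv_norm_sin_sub_mul_I_and_tsum_le_of_abs_re (ζ : ℂ) {c δ : ℝ} (hc : 0 < c)
    (hδ : 0 < δ) (hδζ : δ ≤ |ζ.re|) (hζ : |ζ.re| ≤ π / 2) :
    Summable (fun k : ℤ => ‖sin (ζ - c * k * I)‖⁻¹) ∧
      ∑' k : ℤ, ‖sin (ζ - c * k * I)‖⁻¹ ≤
        π * Real.exp (c / 2) * (∑' k : ℤ, Real.exp (-(c * |k|))) / δ := by
  have hjordan : 2 / π * δ ≤ |Real.sin ζ.re| :=
    (mul_le_mul_of_nonneg_left hδζ (by positivity)).trans (mul_abs_le_abs_sin hζ)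
  have hsin : 0 < |Real.sin ζ.re| := lt_of_lt_of_le (by positivity) hjordan
  obtain ⟨hsum, htsum⟩ := summable_inv_norm_sin_sub_mul_I_and_tsum_le ζ (abs_pos.mp hsin) hc
  refine ⟨hsum, htsum.trans ?_⟩
  calc 2 * Real.exp (c / 2) * (∑' k : ℤ, Real.exp (-(c * |k|))) / |Real.sin ζ.re|
      ≤ 2 * Real.exp (c / 2) * (∑' k : ℤ, Real.exp (-(c * |k|))) / (2 / π * δ) := by
        gcongr
    _ = π * Real.exp (c / 2) * (∑' k : ℤ, Real.exp (-(c * |k|))) / δ := by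
        field_simp

theorem inv_norm_exp_sub_exp_le {u : ℝ} (hu : 0 < u) {z w : ℂ} (hw : w.re ≤ 0)
    (hz : u ≤ z.re) : ‖exp z - exp w‖⁻¹ ≤ u⁻¹ := by
  refine inv_anti₀ hu ?_
  have := norm_sub_norm_le (exp z) (exp w)
  rw [norm_exp, norm_exp] at this
  linarith [Real.add_one_le_exp u, Real.exp_le_exp.mpr hz, Real.exp_le_one_iff.mpr hw]

end Complex

theorem stmt4 (t : ℝ) (ht : t ∈ Set.Ioo (0:ℝ) 1) :
    ∃ C > 0, ∀ u U : ℝ, 0 < u → u < U → U < min 1 ((-Real.log t) / 10) →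
      ∀ z w : ℂ, w.re ∈ Set.Icc (-U) 0 → z.re ∈ Set.Icc u U →
        ‖Complex.exp z - Complex.exp w‖⁻¹ ≤ C * u⁻¹ ∧
        Summable (fun k : ℤ =>
          ‖Complex.sin (-(Real.pi : ℂ) * ((w - z) / (Real.log t : ℂ) -
            2 * (Real.pi : ℂ) * Complex.I * (k : ℂ) / (Real.log t : ℂ)))‖⁻¹) ∧
        (∑' k : ℤ,
          ‖Complex.sin (-(Real.pi : ℂ) * ((w - z) / (Real.log t : ℂ) -
            2 * (Real.pi : ℂ) * Complex.I * (k : ℂ) / (Real.log t : ℂ)))‖⁻¹) ≤ C * u⁻¹ := by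
  have hL : 0 < -Real.log t := neg_pos.mpr (Real.log_neg ht.1 ht.2)
  set P := π / -Real.log t with hP_def
  have hP : 0 < P := by positivity
  have hc : 0 < 2 * π * P := by positivity
  set B := π * Real.exp (2 * π * P / 2) * (∑' k : ℤ, Real.exp (-(2 * π * P * |k|))) / P
  refine ⟨max 1 B, lt_max_of_lt_left one_pos, fun u U hu _ hU z w hw hz => ?_⟩
  have hPU : P * U < π / 10 := by
    rw [hP_def, div_mul_eq_mul_div, div_lt_iff₀ hL]
    nlinarith [lt_of_lt_of_le hU (min_le_right _ _), pi_pos]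
  have harg (k : ℤ) :
      -(π : ℂ) * ((w - z) / (Real.log t : ℂ) - 2 * π * Complex.I * k / (Real.log t : ℂ)) =
        (P : ℂ) * (w - z) - (2 * π * P : ℝ) * k * Complex.I := by
    have : (Real.log t : ℂ) ≠ 0 := Complex.ofReal_ne_zero.mpr (by linarith)
    rw [hP_def]; push_cast; field_simp; ring
  have hre : |((P : ℂ) * (w - z)).re| = P * (z.re - w.re) := by
    rw [Complex.re_ofReal_mul, Complex.sub_re, abs_of_nonpos (by nlinarith [hw.2, hz.1])]; ring
  obtain ⟨hsum, htsum⟩ := Complex.summable_inv_norm_sin_sub_mul_I_and_tsum_le_of_abs_re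
    ((P : ℂ) * (w - z)) hc (mul_pos hP hu) (by rw [hre]; nlinarith [hw.2, hz.1])
    (by rw [hre]; nlinarith [hw.1, hz.2, pi_pos])
  simp only [harg]
  refine ⟨(Complex.inv_norm_exp_sub_exp_le hu hw.2 hz.1).trans ?_, hsum, htsum.trans ?_⟩
  · exact le_mul_of_one_le_left (inv_pos.mpr hu).le (le_max_left _ _)
  · calc _ = B * u⁻¹ := by simp only [B]; field_simp
      _ ≤ max 1 B * u⁻¹ := by gcongr; exact le_max_right _ _
end

section
/- Let a ∈ (0,1). Then there exists A₀ ∈ (0,1), depending on a, such that: (i) the functions S_a(z) and R_a(z) are holomorphic on the vertical strip {z ∈ ℂ : |Re(z)| < π·A₀}; (ii) for every A ∈ (0, A₀) and every ε ∈ {−1, 1}, the function y ↦ Re[S_a(Ay + ε·iy)] is nonincreasing on [0, π] and the function y ↦ Re[S_a(−Ay + ε·iy)] is nondecreasing on [0, π]; and (iii) for every ε ∈ {−1, 1}, the function y ↦ Re[R_a(ε·iy)] is nonincreasing on [0, π]. -/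
noncomputable def Sa (a : ℝ) (z : ℂ) : ℂ :=
  Complex.log (1 + (a : ℂ) * Complex.exp z) - Complex.log (1 + (a : ℂ) * Complex.exp (-z)) -
    2 * (a : ℂ) * z / (1 + (a : ℂ))

noncomputable def Ra (a : ℝ) (z : ℂ) : ℂ :=
  Complex.log (1 + (a : ℂ) * Complex.exp (-z)) - Complex.log (1 + (a : ℂ)) +
    (a : ℂ) * z / (1 + (a : ℂ))

/-!
For `|Re z| < log (1/a)` both `1 + a e^{±z}` lie in the disc `|w - 1| < 1`, so `S_a` and `R_a` are
holomorphic there, and `S_a'(z) = 2a(1-a)/(1+a) · W / ((1+a)² + 2aW)` with `W = cosh z - 1`.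
Along the ray `z = (A + iε) y` the derivative of `Re S_a(z)` is `Re (S_a'(z) (A + iε))`. Writing
`W = -P + iεQ` with `P = 1 - cosh (Ay) cos y` and `Q = sinh (Ay) sin y`, its sign is that of
`2aA(P² + Q²) - (1+a)²(AP + Q)`. Here `P ≥ 0` because `cosh (Ay) ≤ exp (A²y²/2)` and
`cos y ≤ exp (-2y²/π²)` for `A ≤ 2/π`, `Q ≥ 0`, and both are at most `(1+a)²/(2a)` because
`2a cosh (Ay) ≤ 1 + a²` exactly when `Ay ≤ log (1/a)`. The mirrored ray follows as `S_a` is odd.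
For `R_a` no derivative is needed: `Re R_a(iθ) = log (1 + 2a cos θ + a²) / 2 - log (1 + a)`.
-/

section

open Real

lemma cosh_mul_mul_cos_le_one {A y : ℝ} (hA : |A| ≤ 2 / π) (hy : |y| ≤ π) :
    cosh (A * y) * cos y ≤ 1 := by
  have hcos : cos y ≤ exp (-(2 / π ^ 2 * y ^ 2)) :=
    (cos_le_one_sub_mul_cos_sq hy).trans (by linarith [add_one_le_exp (-(2 / π ^ 2 * y ^ 2))])
  have hA2 : A ^ 2 ≤ 2 ^ 2 / π ^ 2 := by rw [← sq_abs, ← div_pow]; gcongr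
  have hexp : (A * y) ^ 2 / 2 ≤ 2 / π ^ 2 * y ^ 2 :=
    calc (A * y) ^ 2 / 2 = A ^ 2 * y ^ 2 / 2 := by ring
      _ ≤ 2 ^ 2 / π ^ 2 * y ^ 2 / 2 := by gcongr
      _ = 2 / π ^ 2 * y ^ 2 := by ring
  calc cosh (A * y) * cos y ≤ cosh (A * y) * exp (-(2 / π ^ 2 * y ^ 2)) := by gcongr
    _ ≤ exp ((A * y) ^ 2 / 2) * exp (-(2 / π ^ 2 * y ^ 2)) := by
      gcongr; exact cosh_le_exp_half_sq _
    _ ≤ 1 := by rw [← exp_add]; exact exp_le_one_iff.mpr (by linarith)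

lemma two_mul_mul_cosh_le_one_add_sq {a x : ℝ} (ha : 0 < a) (hx : |x| ≤ -log a) :
    2 * a * cosh x ≤ 1 + a ^ 2 := by
  have : cosh x ≤ cosh (log a) := cosh_le_cosh.mpr (hx.trans (neg_le_abs _))
  rw [cosh_log ha] at this
  calc 2 * a * cosh x ≤ 2 * a * ((a + a⁻¹) / 2) := by gcongr
    _ = 1 + a ^ 2 := by field_simp; ring

lemma two_mul_mul_sq_add_sq_le {a A y : ℝ} (ha : 0 < a) (hA0 : 0 ≤ A) (hA : A ≤ 2 / π)
    (hy0 : 0 ≤ y) (hyπ : y ≤ π) (hAy : A * y ≤ -log a) :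
    2 * a * A * ((1 - cosh (A * y) * cos y) ^ 2 + (sinh (A * y) * sin y) ^ 2) ≤
      (1 + a) ^ 2 * (A * (1 - cosh (A * y) * cos y) + sinh (A * y) * sin y) := by
  set P := 1 - cosh (A * y) * cos y with hP
  set Q := sinh (A * y) * sin y with hQ
  have hAy0 : 0 ≤ A * y := mul_nonneg hA0 hy0
  have hA1 : A ≤ 1 := hA.trans ((div_le_one pi_pos).mpr two_le_pi)
  have hcosh := two_mul_mul_cosh_le_one_add_sq ha (by rwa [abs_of_nonneg hAy0])
  have hP0 : 0 ≤ P := sub_nonneg.mpr (cosh_mul_mul_cos_le_one (by rwa [abs_of_nonneg hA0])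
    (by rwa [abs_of_nonneg hy0]))
  have hQ0 : 0 ≤ Q := mul_nonneg (sinh_nonneg_iff.mpr hAy0) (sin_nonneg_of_nonneg_of_le_pi hy0 hyπ)
  have hPa : 2 * a * P ≤ (1 + a) ^ 2 := by
    have : P ≤ 1 + cosh (A * y) := by nlinarith [neg_one_le_cos y, cosh_pos (A * y)]
    nlinarith
  have hQa : 2 * a * Q ≤ (1 + a) ^ 2 := by
    have : Q ≤ cosh (A * y) := by
      nlinarith [sin_le_one y, sinh_lt_cosh (A * y), sinh_nonneg_iff.mpr hAy0]
    nlinarith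
  nlinarith [mul_le_mul_of_nonneg_left hPa (mul_nonneg hA0 hP0), mul_le_mul_of_nonneg_left hQa hQ0,
    mul_le_mul_of_nonneg_left hA1 (mul_nonneg (mul_nonneg ha.le hQ0) hQ0)]

end

open Complex

lemma norm_ofReal_mul_exp_lt_one {a : ℝ} (ha : 0 < a) {z : ℂ} (hz : z.re < -Real.log a) :
    ‖(a : ℂ) * exp z‖ < 1 := by
  rw [norm_mul, norm_real, Real.norm_of_nonneg ha.le, norm_exp, ← Real.exp_log ha, ← Real.exp_add,
    Real.exp_lt_one_iff]
  linarith

lemma one_add_ofReal_mul_exp_mem_slitPlane {a : ℝ} (ha : 0 < a) {z : ℂ} (hz : z.re < -Real.log a) :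
    1 + (a : ℂ) * exp z ∈ slitPlane :=
  mem_slitPlane_of_norm_lt_one (norm_ofReal_mul_exp_lt_one ha hz)

lemma Sa_neg (a : ℝ) (z : ℂ) : Sa a (-z) = -Sa a z := by
  simp only [Sa, neg_neg]; ring

noncomputable def Sa' (a : ℝ) (z : ℂ) : ℂ :=
  2 * a * (1 - a) / (1 + a) * ((cosh z - 1) / ((1 + a) ^ 2 + 2 * a * (cosh z - 1)))

lemma hasDerivAt_Sa {a : ℝ} (ha : 0 < a) {z : ℂ} (hz : |z.re| < -Real.log a) :
    HasDerivAt (Sa a) (Sa' a z) z := by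
  have hz' := abs_lt.mp hz
  have hp := one_add_ofReal_mul_exp_mem_slitPlane ha hz'.2
  have hm := one_add_ofReal_mul_exp_mem_slitPlane ha (z := -z) (by rw [neg_re]; linarith)
  have hlogP := (((hasDerivAt_exp z).const_mul (a : ℂ)).const_add 1).clog hp
  have hlogM := ((((hasDerivAt_exp (-z)).comp z (hasDerivAt_neg z)).const_mul (a : ℂ)).const_add
    1).clog hm
  have hlin := ((hasDerivAt_id z).const_mul (2 * (a : ℂ))).div_const (1 + (a : ℂ))
  refine ((hlogP.sub hlogM).sub hlin).congr_deriv ?_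
  have ha1 : (1 : ℂ) + a ≠ 0 := by exact_mod_cast (by linarith : (1 : ℝ) + a ≠ 0)
  have hu := exp_ne_zero z
  have hD : (1 + a) ^ 2 + 2 * a * (cosh z - 1) = (1 + a * exp z) * (1 + a * exp (-z)) := by
    rw [cosh, exp_neg]; field_simp; ring
  have hp0 := slitPlane_ne_zero hp
  have hm0 := slitPlane_ne_zero hm
  rw [Sa', hD]
  simp only [cosh, Function.comp_apply, exp_neg] at hm0 ⊢
  have hua : exp z + a ≠ 0 := by
    contrapose! hm0; field_simp; linear_combination hm0
  field_simp
  ring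

lemma differentiableAt_Ra {a : ℝ} (ha : 0 < a) {z : ℂ} (hz : -z.re < -Real.log a) :
    DifferentiableAt ℂ (Ra a) z := by
  have hm := one_add_ofReal_mul_exp_mem_slitPlane ha (z := -z) (by rwa [neg_re])
  unfold Ra
  fun_prop (disch := assumption)

lemma re_Ra_ofReal_mul_I (a θ : ℝ) :
    (Ra a (θ * I)).re = Real.log (1 + 2 * a * Real.cos θ + a ^ 2) / 2 - Real.log (1 + a) := by
  have hnormSq : normSq (1 + a * exp (-(θ * I))) = 1 + 2 * a * Real.cos θ + a ^ 2 := by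
    rw [← neg_mul, ← ofReal_neg, normSq_apply]
    simp only [add_re, add_im, one_re, one_im, re_ofReal_mul, im_ofReal_mul, exp_ofReal_mul_I_re,
      exp_ofReal_mul_I_im, Real.cos_neg, Real.sin_neg]
    nlinarith [Real.sin_sq_add_cos_sq θ]
  have hlin : ((a : ℂ) * (θ * I) / (1 + a)).re = 0 := by
    rw [← ofReal_one, ← ofReal_add, div_ofReal_re]; simp
  have hconst : (log (1 + a : ℂ)).re = Real.log (1 + a) := by
    rw [← ofReal_one, ← ofReal_add, log_ofReal_re]
  rw [Ra, add_re, sub_re, log_re, hconst, hlin, norm_def, hnormSq,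
    Real.log_sqrt (hnormSq ▸ normSq_nonneg _)]
  ring

lemma antitoneOn_re_comp_ofReal_mul {f f' : ℂ → ℂ} {c : ℂ} {s : Set ℝ} (hs : Convex ℝ s)
    (hf : ∀ t ∈ s, HasDerivAt f (f' (c * t)) (c * t)) (hf' : ∀ t ∈ s, (f' (c * t) * c).re ≤ 0) :
    AntitoneOn (fun t : ℝ => (f (c * t)).re) s := by
  have hpath : ∀ t ∈ s, HasDerivAt (fun t : ℝ => (f (c * t)).re) (f' (c * t) * c).re t :=
    fun t ht =>
    HasDerivAt.real_of_complex (e := fun w => f (c * w))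
      ((hf t ht).comp (t : ℂ) ((hasDerivAt_id _).const_mul c) |>.congr_deriv (by simp))
  refine antitoneOn_of_hasDerivWithinAt_nonpos hs
    (fun t ht => (hpath t ht).continuousAt.continuousWithinAt)
    (fun t ht => (hpath t (interior_subset ht)).hasDerivWithinAt)
    (fun t ht => hf' t (interior_subset ht))

lemma re_mul_div_nonpos {W c : ℂ} {b r : ℝ} (h : b * (W * c).re + r * c.re * normSq W ≤ 0) :
    (W * c / (b + r * W)).re ≤ 0 := by
  have hnum : (W * c).re * (b + r * W).re + (W * c).im * (b + r * W).im
      = b * (W * c).re + r * c.re * normSq W := by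
    simp only [mul_re, mul_im, add_re, add_im, ofReal_re, ofReal_im, normSq_apply]; ring
  rw [div_re, ← add_div, hnum]
  exact div_nonpos_of_nonpos_of_nonneg h (normSq_nonneg _)

lemma cosh_add_mul_I_mul_ofReal {A ε y : ℝ} (hε : ε = -1 ∨ ε = 1) :
    cosh ((A + ε * I) * y) =
      (Real.cosh (A * y) * Real.cos y : ℝ) + (ε * (Real.sinh (A * y) * Real.sin y) : ℝ) * I := by
  have hz : ((A : ℂ) + ε * I) * y = (A * y : ℝ) + (ε * y : ℝ) * I := by push_cast; ring
  rw [hz, cosh_add, cosh_mul_I, sinh_mul_I, ← ofReal_cosh, ← ofReal_sinh, ← ofReal_cos,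
    ← ofReal_sin]
  rcases hε with rfl | rfl <;> simp <;> ring

lemma re_Sa'_mul_nonpos {a A ε y : ℝ} (ha0 : 0 < a) (ha1 : a < 1) (hA0 : 0 ≤ A)
    (hA : A ≤ 2 / Real.pi) (hε : ε = -1 ∨ ε = 1) (hy0 : 0 ≤ y) (hyπ : y ≤ Real.pi)
    (hAy : A * y ≤ -Real.log a) :
    (Sa' a ((A + ε * I) * y) * (A + ε * I)).re ≤ 0 := by
  set P := 1 - Real.cosh (A * y) * Real.cos y with hP
  set Q := Real.sinh (A * y) * Real.sin y with hQ
  have hW : cosh ((A + ε * I) * y) - 1 = (-P : ℝ) + (ε * Q : ℝ) * I := by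
    rw [cosh_add_mul_I_mul_ofReal hε, hP, hQ]; push_cast; ring
  have hSa' : Sa' a ((A + ε * I) * y) * (A + ε * I) =
      (2 * a * (1 - a) / (1 + a) : ℝ) * ((cosh ((A + ε * I) * y) - 1) * (A + ε * I) /
        (((1 + a) ^ 2 : ℝ) + (2 * a : ℝ) * (cosh ((A + ε * I) * y) - 1))) := by
    simp only [Sa']; push_cast; ring
  rw [hSa', re_ofReal_mul]
  refine mul_nonpos_of_nonneg_of_nonpos (div_nonneg (by nlinarith) (by linarith))
    (re_mul_div_nonpos ?_)
  have hε2 : ε ^ 2 = 1 := by rcases hε with rfl | rfl <;> norm_num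
  rw [hW]
  simp only [mul_re, mul_im, add_re, add_im, ofReal_re, ofReal_im, I_re, I_im, normSq_apply]
  linear_combination two_mul_mul_sq_add_sq_le ha0 hA0 hA hy0 hyπ hAy
    + (2 * a * A * Q ^ 2 - (1 + a) ^ 2 * Q) * hε2

lemma antitoneOn_re_Sa {a A ε : ℝ} (ha0 : 0 < a) (ha1 : a < 1) (hA0 : 0 ≤ A)
    (hA : A ≤ 2 / Real.pi) (hAπ : Real.pi * A < -Real.log a) (hε : ε = -1 ∨ ε = 1) :
    AntitoneOn (fun y : ℝ => (Sa a ((A + ε * I) * y)).re) (Set.Icc 0 Real.pi) := by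
  have hAy : ∀ y ∈ Set.Icc 0 Real.pi, A * y < -Real.log a := fun y hy =>
    lt_of_le_of_lt (by nlinarith [hy.2]) hAπ
  refine antitoneOn_re_comp_ofReal_mul (convex_Icc 0 Real.pi) (fun y hy => hasDerivAt_Sa ha0 ?_)
    (fun y hy => re_Sa'_mul_nonpos ha0 ha1 hA0 hA hε hy.1 hy.2 (hAy y hy).le)
  simpa [abs_of_nonneg (mul_nonneg hA0 hy.1)] using hAy y hy

lemma antitoneOn_re_Ra {a ε : ℝ} (ha0 : 0 ≤ a) (ha1 : a < 1) (hε : ε = -1 ∨ ε = 1) :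
    AntitoneOn (fun y : ℝ => (Ra a (ε * I * y)).re) (Set.Icc 0 Real.pi) := by
  have hRa : ∀ y : ℝ, (Ra a (ε * I * y)).re =
      Real.log (1 + 2 * a * Real.cos y + a ^ 2) / 2 - Real.log (1 + a) := fun y => by
    rw [show (ε : ℂ) * I * y = (ε * y : ℝ) * I by push_cast; ring, re_Ra_ofReal_mul_I]
    rcases hε with rfl | rfl <;> simp
  intro x hx y hy hxy
  simp only [hRa]
  have hpos : 0 < 1 + 2 * a * Real.cos y + a ^ 2 := by
    nlinarith [Real.neg_one_le_cos y]
  gcongr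
  exact Real.cos_le_cos_of_nonneg_of_le_pi hx.1 hy.2 hxy

theorem stmt5 (a : ℝ) (ha : a ∈ Set.Ioo (0:ℝ) 1) :
    ∃ A₀ ∈ Set.Ioo (0:ℝ) 1,
      DifferentiableOn ℂ (Sa a) {z : ℂ | |z.re| < Real.pi * A₀} ∧
      DifferentiableOn ℂ (Ra a) {z : ℂ | |z.re| < Real.pi * A₀} ∧
      (∀ A ∈ Set.Ioo (0:ℝ) A₀, ∀ ε : ℝ, ε = -1 ∨ ε = 1 →
        AntitoneOn (fun y : ℝ => (Sa a (((A * y : ℝ) : ℂ) + (ε : ℂ) * Complex.I * (y : ℂ))).re)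
          (Set.Icc 0 Real.pi) ∧
        MonotoneOn (fun y : ℝ => (Sa a (((-(A * y) : ℝ) : ℂ) + (ε : ℂ) * Complex.I * (y : ℂ))).re)
          (Set.Icc 0 Real.pi)) ∧
      (∀ ε : ℝ, ε = -1 ∨ ε = 1 →
        AntitoneOn (fun y : ℝ => (Ra a ((ε : ℂ) * Complex.I * (y : ℂ))).re)
          (Set.Icc 0 Real.pi)) := by
  obtain ⟨ha0, ha1⟩ := ha
  have hlog : 0 < -Real.log a := neg_pos.mpr (Real.log_neg ha0 ha1)
  set A₀ := min (1 / 2) (-Real.log a / Real.pi)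
  have hA₀ : Real.pi * A₀ ≤ -Real.log a :=
    (mul_le_mul_of_nonneg_left (min_le_right _ _) Real.pi_pos.le).trans_eq (by field_simp)
  have hA₀2 : A₀ ≤ 2 / Real.pi :=
    (min_le_left _ _).trans (by rw [le_div_iff₀ Real.pi_pos]; linarith [Real.pi_le_four])
  refine ⟨A₀, ⟨lt_min one_half_pos (by positivity), (min_le_left _ _).trans_lt one_half_lt_one⟩,
    fun z hz => (hasDerivAt_Sa ha0 (hz.trans_le hA₀)).differentiableAt.differentiableWithinAt,
    fun z hz => (differentiableAt_Ra ha0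
      ((neg_le_abs _).trans_lt (hz.trans_le hA₀))).differentiableWithinAt,
    fun A hA ε hε => ?_, fun ε hε => antitoneOn_re_Ra ha0.le ha1 hε⟩
  have hAπ : Real.pi * A < -Real.log a := (mul_lt_mul_of_pos_left hA.2 Real.pi_pos).trans_le hA₀
  constructor
  · have hray : ∀ y : ℝ, ((A * y : ℝ) : ℂ) + ε * I * y = (A + ε * I) * y := fun y => by
      push_cast; ring
    simpa only [hray] using antitoneOn_re_Sa ha0 ha1 hA.1.le (hA.2.le.trans hA₀2) hAπ hε
  · have hray : ∀ y : ℝ, ((-(A * y) : ℝ) : ℂ) + ε * I * y = -((A + (-ε : ℝ) * I) * y) :=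
      fun y => by push_cast; ring
    simpa only [hray, Sa_neg, neg_re] using (antitoneOn_re_Sa ha0 ha1 hA.1.le
      (hA.2.le.trans hA₀2) hAπ (ε := -ε) (by rcases hε with rfl | rfl <;> norm_num)).neg
end

section
/- There exists a universal constant C₃ > 0 such that for every a ∈ (0, e^{−2π}] and every z = x + iy ∈ ℂ with x, y ∈ [−π, π], one has −C₃·a·|z|² ≤ Re[R_a(z)] ≤ C₃·a·|z|². -/
open Complex

theorem Convex.norm_image_le_mul_norm_sq {𝕜 G : Type*} [RCLike 𝕜] [NormedAddCommGroup G]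
    [NormedSpace 𝕜 G] {f f' f'' : 𝕜 → G} {s : Set 𝕜} {C : ℝ} {z : 𝕜} (hs : Convex ℝ s)
    (hf : ∀ x ∈ s, HasDerivWithinAt f (f' x) s x)
    (hf' : ∀ x ∈ s, HasDerivWithinAt f' (f'' x) s x) (bound : ∀ x ∈ s, ‖f'' x‖ ≤ C)
    (h0 : 0 ∈ s) (hz : z ∈ s) (hf0 : f 0 = 0) (hf'0 : f' 0 = 0) :
    ‖f z‖ ≤ C * ‖z‖ ^ 2 := by
  have hseg : segment ℝ 0 z ⊆ s := hs.segment_subset h0 hz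
  have hC : 0 ≤ C := (norm_nonneg _).trans (bound 0 h0)
  have hf'_le : ∀ x ∈ segment ℝ 0 z, ‖f' x‖ ≤ C * ‖z‖ := fun x hx => by
    have := (convex_segment 0 z).norm_image_sub_le_of_norm_hasDerivWithin_le
      (fun y hy => (hf' y (hseg hy)).mono hseg) (fun y hy => bound y (hseg hy))
      (left_mem_segment ℝ 0 z) hx
    rw [hf'0, sub_zero, sub_zero] at this
    exact this.trans (mul_le_mul_of_nonneg_left (by simpa using norm_sub_le_of_mem_segment hx) hC)
  have := (convex_segment 0 z).norm_image_sub_le_of_norm_hasDerivWithin_le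
    (fun y hy => (hf y (hseg hy)).mono hseg) hf'_le
    (left_mem_segment ℝ 0 z) (right_mem_segment ℝ 0 z)
  rw [hf0, sub_zero, sub_zero] at this
  linarith

theorem convex_abs_re_le (r : ℝ) : Convex ℝ {w : ℂ | |w.re| ≤ r} := by
  convert (convex_halfSpace_re_ge (-r)).inter (convex_halfSpace_re_le r) using 1
  ext w
  simp [abs_le]

theorem norm_div_one_add_sq_le {u : ℂ} (hu : ‖u‖ ≤ 1 / 2) : ‖u / (1 + u) ^ 2‖ ≤ 4 * ‖u‖ := by
  have h1 : 1 / 2 ≤ ‖1 + u‖ := by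
    have := norm_sub_norm_le (1 : ℂ) (-u)
    rw [norm_one, norm_neg, sub_neg_eq_add] at this
    linarith
  have h2 : 1 / 4 ≤ ‖1 + u‖ ^ 2 := by nlinarith
  rw [norm_div, norm_pow, div_le_iff₀ (by positivity)]
  nlinarith [mul_le_mul_of_nonneg_left h2 (norm_nonneg u)]

theorem norm_ofReal_mul_cexp_neg_le {a r : ℝ} {w : ℂ} (hw : |w.re| ≤ r) :
    ‖(a : ℂ) * exp (-w)‖ ≤ |a| * Real.exp r := by
  rw [norm_mul, norm_real, Real.norm_eq_abs, norm_exp, neg_re]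
  gcongr
  linarith [neg_abs_le w.re]

theorem hasDerivAt_Ra {a : ℝ} {w : ℂ} (hw : 1 + (a : ℂ) * exp (-w) ∈ slitPlane) :
    HasDerivAt (Ra a)
      ((a : ℂ) / (1 + a) - (a : ℂ) * exp (-w) / (1 + (a : ℂ) * exp (-w))) w := by
  have hu : HasDerivAt (fun x => 1 + (a : ℂ) * exp (-x)) (-((a : ℂ) * exp (-w))) w := by
    simpa using (((hasDerivAt_neg w).cexp).const_mul (a : ℂ)).const_add 1
  refine (((hu.clog hw).sub_const (log (1 + (a : ℂ)))).add
    (((hasDerivAt_id w).const_mul (a : ℂ)).div_const (1 + (a : ℂ)))).congr_deriv ?_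
  ring

theorem hasDerivAt_deriv_Ra {a : ℝ} {w : ℂ} (hw : 1 + (a : ℂ) * exp (-w) ≠ 0) :
    HasDerivAt (fun x => (a : ℂ) / (1 + a) - (a : ℂ) * exp (-x) / (1 + (a : ℂ) * exp (-x)))
      ((a : ℂ) * exp (-w) / (1 + (a : ℂ) * exp (-w)) ^ 2) w := by
  have hu : HasDerivAt (fun x => (a : ℂ) * exp (-x)) (-((a : ℂ) * exp (-w))) w := by
    simpa using ((hasDerivAt_neg w).cexp).const_mul (a : ℂ)
  refine ((hu.div (hu.const_add 1) hw).const_sub ((a : ℂ) / (1 + a))).congr_deriv ?_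
  field_simp
  ring

theorem norm_Ra_le {a r : ℝ} (har : |a| * Real.exp r ≤ 1 / 2) {z : ℂ} (hz : |z.re| ≤ r) :
    ‖Ra a z‖ ≤ 4 * (|a| * Real.exp r) * ‖z‖ ^ 2 := by
  have hu : ∀ w ∈ {w : ℂ | |w.re| ≤ r}, ‖(a : ℂ) * exp (-w)‖ ≤ 1 / 2 := fun w hw =>
    (norm_ofReal_mul_cexp_neg_le hw).trans har
  have hslit : ∀ w ∈ {w : ℂ | |w.re| ≤ r}, 1 + (a : ℂ) * exp (-w) ∈ slitPlane := fun w hw =>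
    mem_slitPlane_of_norm_lt_one ((hu w hw).trans_lt (by norm_num))
  have hr : 0 ≤ r := (abs_nonneg _).trans hz
  refine (convex_abs_re_le r).norm_image_le_mul_norm_sq
    (fun w hw => (hasDerivAt_Ra (hslit w hw)).hasDerivWithinAt)
    (fun w hw => (hasDerivAt_deriv_Ra (slitPlane_ne_zero (hslit w hw))).hasDerivWithinAt)
    (fun w hw => (norm_div_one_add_sq_le (hu w hw)).trans ?_)
    (by simpa using hr) hz (by simp [Ra]) (by simp)
  gcongr
  exact norm_ofReal_mul_cexp_neg_le hw

theorem stmt9 :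
    ∃ C₃ > 0, ∀ a : ℝ, a ∈ Set.Ioc 0 (Real.exp (-(2 * Real.pi))) →
      ∀ x ∈ Set.Icc (-Real.pi) Real.pi, ∀ y ∈ Set.Icc (-Real.pi) Real.pi,
        -(C₃ * a * ‖(x : ℂ) + Complex.I * (y : ℂ)‖ ^ 2) ≤
            (Ra a ((x : ℂ) + Complex.I * (y : ℂ))).re ∧
        (Ra a ((x : ℂ) + Complex.I * (y : ℂ))).re ≤
            C₃ * a * ‖(x : ℂ) + Complex.I * (y : ℂ)‖ ^ 2 := by
  refine ⟨4 * Real.exp Real.pi, by positivity, ?_⟩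
  rintro a ⟨ha0, ha⟩ x hx y -
  have hexp : Real.exp (-Real.pi) ≤ 1 / 2 := by
    rw [Real.exp_neg, inv_le_comm₀ (Real.exp_pos _) (by norm_num)]
    linarith [Real.add_one_le_exp Real.pi, Real.pi_gt_three]
  have har : |a| * Real.exp Real.pi ≤ 1 / 2 := by
    calc |a| * Real.exp Real.pi ≤ Real.exp (-(2 * Real.pi)) * Real.exp Real.pi := by
          rw [abs_of_pos ha0]; gcongr
      _ = Real.exp (-Real.pi) := by rw [← Real.exp_add]; ring_nf
      _ ≤ 1 / 2 := hexp
  have hz : |((x : ℂ) + I * (y : ℂ)).re| ≤ Real.pi := by simpa [abs_le] using hx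
  have hbound := (abs_re_le_norm _).trans (norm_Ra_le har hz)
  rw [abs_of_pos ha0] at hbound
  obtain ⟨hlower, hupper⟩ := abs_le.1 hbound
  exact ⟨by linarith, by linarith⟩
end

section
/- Let M, n ∈ ℕ, N ∈ ℤ_{≥0}, t ∈ (0,1) and R > 0. Suppose a, z ∈ ℂ satisfy 0 < |a| = |z| ≤ 1, and that z_1,…,z_N, w_1,…,w_N, x_1,…,x_n, y_1,…,y_M ∈ ℂ satisfy |z_i| ≥ |z|, |w_i| ≥ |z|, |x_j| ≤ R, |y_k| ≤ 1 for all i, j, k. Then for every u ∈ ℂ and every integer c ≥ 1, one has |u^c/(a − z·t^c) · ∏_{k=1}^M 1/(1 − z·y_k·t^c) · ∏_{j=1}^n (1 − x_j·z^{−1}·t^{−c}) · ∏_{i=1}^N (z·w_i^{−1}·t^c; t)_∞/(z·z_i^{−1}·t^c; t)_∞| ≤ (−t;t)_∞^N · (1 + R/|a|)^n · |u|^c · t^{−cn} / (|a|·(1−t)^{M+1}·(t;t)_∞^N). In particular all factors on the left are well defined and nonzero where required. -/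
noncomputable def cPoch (a : ℂ) (t : ℝ) : ℂ := ∏' m : ℕ, (1 - a * (t : ℂ) ^ m)

noncomputable def rPoch (a t : ℝ) : ℝ := ∏' m : ℕ, (1 - a * t ^ m)

noncomputable def hTerm (M n N : ℕ) (t : ℝ) (a z : ℂ)
    (zs ws : Fin N → ℂ) (xs : Fin n → ℂ) (ys : Fin M → ℂ) (u : ℂ) (c : ℕ) : ℂ :=
  u ^ c / (a - z * (t : ℂ) ^ c) * (∏ k : Fin M, (1 - z * ys k * (t : ℂ) ^ c)⁻¹) *
    (∏ j : Fin n, (1 - xs j * z⁻¹ * (t : ℂ) ^ (-(c : ℤ)))) *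
    ∏ i : Fin N, cPoch (z * (ws i)⁻¹ * (t : ℂ) ^ c) t / cPoch (z * (zs i)⁻¹ * (t : ℂ) ^ c) t

/-! Each of the four factors of the term is bounded separately. As `‖z t^c‖ = ‖a‖ t^c ≤ ‖a‖ t`
and `‖z y_k t^c‖ ≤ t`, the reverse triangle inequality bounds the first two factors by
`‖u‖^c / (‖a‖ (1 - t))` and `(1 - t)⁻¹`; as `t^{-c} ≥ 1`, each `1 - x_j z⁻¹ t^{-c}` has norm at most
`(1 + R / ‖a‖) t^{-c}`. Finally every Pochhammer argument `z w⁻¹ t^c` has norm at most `t`, so a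
termwise comparison of the convergent products gives `(t;t)_∞ ≤ ‖(w;t)_∞‖ ≤ (-t;t)_∞`, and
`(t;t)_∞ > 0`. -/

lemma Multipliable.tprod_le_tprod_of_nonneg {ι : Type*} {f g : ι → ℝ} (h₀ : ∀ i, 0 ≤ f i)
    (h : ∀ i, f i ≤ g i) (hf : Multipliable f) (hg : Multipliable g) :
    ∏' i, f i ≤ ∏' i, g i :=
  le_of_tendsto_of_tendsto' hf.hasProd hg.hasProd fun _ ↦
    Finset.prod_le_prod (fun i _ ↦ h₀ i) fun i _ ↦ h i

lemma Real.tprod_one_add_pos {ι : Type*} {f : ι → ℝ} (hf : ∀ i, 0 < 1 + f i)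
    (hs : Summable f) : 0 < ∏' i, (1 + f i) := by
  rw [← Real.rexp_tsum_eq_tprod hf (Real.summable_log_one_add_of_summable hs)]
  exact Real.exp_pos _

section Pochhammer

variable {t : ℝ}

lemma summable_mul_pow (ht0 : 0 ≤ t) (ht1 : t < 1) (a : ℝ) : Summable fun m : ℕ ↦ a * t ^ m :=
  (summable_geometric_of_lt_one ht0 ht1).mul_left a

lemma multipliable_rPoch (ht0 : 0 ≤ t) (ht1 : t < 1) (a : ℝ) :
    Multipliable fun m : ℕ ↦ 1 - a * t ^ m := by
  simpa [sub_eq_add_neg] using Real.multipliable_one_add_of_summable (summable_mul_pow ht0 ht1 a).neg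

lemma multipliable_cPoch (ht0 : 0 ≤ t) (ht1 : t < 1) (w : ℂ) :
    Multipliable fun m : ℕ ↦ 1 - w * (t : ℂ) ^ m := by
  have hs : Summable fun m : ℕ ↦ ‖-(w * (t : ℂ) ^ m)‖ := by
    simpa [abs_of_nonneg ht0] using summable_mul_pow ht0 ht1 ‖w‖
  simpa [sub_eq_add_neg] using multipliable_one_add_of_summable hs

lemma rPoch_pos (ht0 : 0 ≤ t) (ht1 : t < 1) {a : ℝ} (ha : |a| < 1) : 0 < rPoch a t := by
  refine (Real.tprod_one_add_pos (f := fun m ↦ -(a * t ^ m)) (fun m ↦ ?_)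
    (summable_mul_pow ht0 ht1 a).neg).trans_eq (by simp [rPoch, sub_eq_add_neg])
  have : |a * t ^ m| < 1 := by
    rw [abs_mul, abs_pow, abs_of_nonneg ht0]
    exact (mul_le_of_le_one_right (abs_nonneg a) (pow_le_one₀ ht0 ht1.le)).trans_lt ha
  linarith [le_abs_self (a * t ^ m)]

lemma norm_cPoch_le (ht0 : 0 ≤ t) (ht1 : t < 1) {w : ℂ} {r : ℝ} (hw : ‖w‖ ≤ r) :
    ‖cPoch w t‖ ≤ rPoch (-r) t := by
  rw [cPoch, (multipliable_cPoch ht0 ht1 w).norm_tprod]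
  refine Multipliable.tprod_le_tprod_of_nonneg (fun _ ↦ norm_nonneg _) (fun m ↦ ?_)
    (by simpa using (multipliable_cPoch ht0 ht1 w).norm) (multipliable_rPoch ht0 ht1 _)
  calc ‖1 - w * (t : ℂ) ^ m‖ ≤ 1 + ‖w‖ * t ^ m := by
        simpa [abs_of_nonneg ht0] using norm_sub_le (1 : ℂ) (w * (t : ℂ) ^ m)
    _ ≤ 1 - -r * t ^ m := by nlinarith [pow_nonneg ht0 m]

lemma rPoch_le_norm_cPoch (ht0 : 0 ≤ t) (ht1 : t < 1) {w : ℂ} {r : ℝ} (hw : ‖w‖ ≤ r)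
    (hr : r ≤ 1) : rPoch r t ≤ ‖cPoch w t‖ := by
  rw [cPoch, (multipliable_cPoch ht0 ht1 w).norm_tprod]
  refine Multipliable.tprod_le_tprod_of_nonneg (fun m ↦ ?_) (fun m ↦ ?_)
    (multipliable_rPoch ht0 ht1 _) (by simpa using (multipliable_cPoch ht0 ht1 w).norm)
  · nlinarith [pow_le_one₀ ht0 ht1.le (n := m), pow_nonneg ht0 m, (norm_nonneg w).trans hw]
  · calc 1 - r * t ^ m ≤ 1 - ‖w‖ * t ^ m := by nlinarith [pow_nonneg ht0 m]
      _ ≤ ‖1 - w * (t : ℂ) ^ m‖ := by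
        simpa [abs_of_nonneg ht0] using norm_sub_norm_le (1 : ℂ) (w * (t : ℂ) ^ m)

lemma norm_cPoch_div_cPoch_le (ht0 : 0 ≤ t) (ht1 : t < 1) {v w : ℂ} (hv : ‖v‖ ≤ t)
    (hw : ‖w‖ ≤ t) : ‖cPoch v t / cPoch w t‖ ≤ rPoch (-t) t / rPoch t t := by
  rw [norm_div]
  exact div_le_div₀ ((norm_nonneg _).trans (norm_cPoch_le ht0 ht1 hv)) (norm_cPoch_le ht0 ht1 hv)
    (rPoch_pos ht0 ht1 (by rwa [abs_of_nonneg ht0])) (rPoch_le_norm_cPoch ht0 ht1 hw ht1.le)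

end Pochhammer

section NormBounds

variable {𝕜 : Type*} [NormedField 𝕜]

lemma norm_prod_le_pow_card {ι : Type*} [Fintype ι] {f : ι → 𝕜} {b : ℝ}
    (h : ∀ i, ‖f i‖ ≤ b) : ‖∏ i, f i‖ ≤ b ^ Fintype.card ι := by
  rw [norm_prod]
  calc ∏ i, ‖f i‖ ≤ ∏ _i : ι, b :=
        Finset.prod_le_prod (fun _ _ ↦ norm_nonneg _) fun i _ ↦ h i
    _ = b ^ Fintype.card ι := by simp

lemma norm_mul_inv_le_one {z v : 𝕜} (h : ‖z‖ ≤ ‖v‖) : ‖z * v⁻¹‖ ≤ 1 := by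
  rw [norm_mul, norm_inv]
  exact mul_inv_le_one_of_le₀ h (norm_nonneg v)

lemma norm_div_sub_mul_le {u a z q : 𝕜} {r : ℝ} (haz : ‖a‖ = ‖z‖) (ha : 0 < ‖a‖)
    (hq : ‖q‖ ≤ r) (hr : r < 1) : ‖u / (a - z * q)‖ ≤ ‖u‖ / (‖a‖ * (1 - r)) := by
  rw [norm_div]
  refine div_le_div_of_nonneg_left (norm_nonneg u) (by nlinarith) ?_
  calc ‖a‖ * (1 - r) ≤ ‖a‖ - ‖z * q‖ := by rw [norm_mul, ← haz]; nlinarith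
    _ ≤ ‖a - z * q‖ := norm_sub_norm_le a (z * q)

lemma norm_inv_one_sub_le {w : 𝕜} {r : ℝ} (hw : ‖w‖ ≤ r) (hr : r < 1) :
    ‖(1 - w)⁻¹‖ ≤ (1 - r)⁻¹ := by
  rw [norm_inv]
  refine inv_anti₀ (by linarith) ?_
  calc 1 - r ≤ 1 - ‖w‖ := by linarith
    _ ≤ ‖1 - w‖ := by simpa using norm_sub_norm_le (1 : 𝕜) w

lemma norm_one_sub_mul_inv_mul_le {x z q : 𝕜} {R : ℝ} (hx : ‖x‖ ≤ R) (hq : 1 ≤ ‖q‖) :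
    ‖1 - x * z⁻¹ * q‖ ≤ (1 + R / ‖z‖) * ‖q‖ := by
  calc ‖1 - x * z⁻¹ * q‖ ≤ 1 + ‖x‖ / ‖z‖ * ‖q‖ := by
        simpa [div_eq_mul_inv] using norm_sub_le (1 : 𝕜) (x * z⁻¹ * q)
    _ ≤ ‖q‖ + R / ‖z‖ * ‖q‖ := by gcongr
    _ = (1 + R / ‖z‖) * ‖q‖ := by ring

end NormBounds

theorem stmt15_general (M n : ℕ) (N : ℕ) (t : ℝ) (ht : t ∈ Set.Ioo (0:ℝ) 1)
    (R : ℝ) (a z : ℂ) (ha : 0 < ‖a‖)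
    (haz : ‖a‖ = ‖z‖) (hz1 : ‖z‖ ≤ 1)
    (zs ws : Fin N → ℂ) (xs : Fin n → ℂ) (ys : Fin M → ℂ)
    (hzs : ∀ i, ‖z‖ ≤ ‖zs i‖)
    (hws : ∀ i, ‖z‖ ≤ ‖ws i‖)
    (hxs : ∀ j, ‖xs j‖ ≤ R) (hys : ∀ k, ‖ys k‖ ≤ 1)
    (u : ℂ) (c : ℕ) (hc : 1 ≤ c) :
    ‖hTerm M n N t a z zs ws xs ys u c‖ ≤
      rPoch (-t) t ^ N * (1 + R / ‖a‖) ^ n * ‖u‖ ^ c *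
        t ^ (-((c * n : ℕ) : ℤ)) / (‖a‖ * (1 - t) ^ (M + 1) * rPoch t t ^ N) := by
  obtain ⟨ht0, ht1⟩ := ht
  have hτ : ‖(t : ℂ) ^ c‖ ≤ t := by
    rw [norm_pow, Complex.norm_real, Real.norm_of_nonneg ht0.le]
    exact pow_le_of_le_one ht0.le ht1.le (by omega)
  have hτinv : ‖(t : ℂ) ^ (-(c : ℤ))‖ = t ^ (-(c : ℤ)) := by
    rw [norm_zpow, Complex.norm_real, Real.norm_of_nonneg ht0.le]
  have h₁ := norm_div_sub_mul_le (u := u ^ c) haz ha hτ ht1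
  have h₂ : ‖∏ k, (1 - z * ys k * (t : ℂ) ^ c)⁻¹‖ ≤ (1 - t)⁻¹ ^ M := by
    simpa only [Fintype.card_fin, inv_pow] using norm_prod_le_pow_card fun k ↦ norm_inv_one_sub_le
      ((norm_mul_le_of_le (norm_mul_le_of_le hz1 (hys k)) hτ).trans_eq (by ring)) ht1
  have h₃ : ‖∏ j, (1 - xs j * z⁻¹ * (t : ℂ) ^ (-(c : ℤ)))‖ ≤
      ((1 + R / ‖a‖) * t ^ (-(c : ℤ))) ^ n := by
    simpa only [Fintype.card_fin, hτinv, haz] using norm_prod_le_pow_card fun j ↦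
      norm_one_sub_mul_inv_mul_le (z := z) (q := (t : ℂ) ^ (-(c : ℤ)))
      (hxs j) (hτinv ▸ one_le_zpow_of_nonpos₀ ht0 ht1.le (by omega))
  have h₄ : ‖∏ i, cPoch (z * (ws i)⁻¹ * (t : ℂ) ^ c) t / cPoch (z * (zs i)⁻¹ * (t : ℂ) ^ c) t‖ ≤
      (rPoch (-t) t / rPoch t t) ^ N := by
    have harg : ∀ v : ℂ, ‖z‖ ≤ ‖v‖ → ‖z * v⁻¹ * (t : ℂ) ^ c‖ ≤ t := fun v hv ↦ by
      simpa using norm_mul_le_of_le (norm_mul_inv_le_one hv) hτ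
    simpa using norm_prod_le_pow_card fun i ↦
      norm_cPoch_div_cPoch_le ht0.le ht1 (harg _ (hws i)) (harg _ (hzs i))
  refine (norm_mul_le_of_le (norm_mul_le_of_le (norm_mul_le_of_le h₁ h₂) h₃) h₄).trans_eq ?_
  have h1t : 1 - t ≠ 0 := by linarith
  have hA : ‖a‖ ≠ 0 := ha.ne'
  have hP : rPoch t t ≠ 0 := (rPoch_pos ht0.le ht1 (by rwa [abs_of_pos ht0])).ne'
  rw [norm_pow, Nat.cast_mul, ← neg_mul, zpow_mul, zpow_natCast, div_pow, mul_pow, inv_pow]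
  field_simp
  ring

theorem stmt15 (M n : ℕ) (hM : 0 < M) (hn : 0 < n) (N : ℕ) (t : ℝ) (ht : t ∈ Set.Ioo (0:ℝ) 1)
    (R : ℝ) (hR : 0 < R) (a z : ℂ) (ha : 0 < ‖a‖)
    (haz : ‖a‖ = ‖z‖) (hz1 : ‖z‖ ≤ 1)
    (zs ws : Fin N → ℂ) (xs : Fin n → ℂ) (ys : Fin M → ℂ)
    (hzs : ∀ i, ‖z‖ ≤ ‖zs i‖)
    (hws : ∀ i, ‖z‖ ≤ ‖ws i‖)
    (hxs : ∀ j, ‖xs j‖ ≤ R) (hys : ∀ k, ‖ys k‖ ≤ 1)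
    (u : ℂ) (c : ℕ) (hc : 1 ≤ c) :
    ‖hTerm M n N t a z zs ws xs ys u c‖ ≤
      rPoch (-t) t ^ N * (1 + R / ‖a‖) ^ n * ‖u‖ ^ c *
        t ^ (-((c * n : ℕ) : ℤ)) / (‖a‖ * (1 - t) ^ (M + 1) * rPoch t t ^ N) :=
  stmt15_general M n N t ht R a z ha haz hz1 zs ws xs ys hzs hws hxs hys u c hc
end

section
/- Let (Ω, F, ℙ) be a probability space and let (X_n, Y_n), n ∈ ℕ, be a sequence of pairs of real-valued random variables on Ω. Let f_n : ℝ → [0,1] be a sequence of functions such that for each δ > 0, f_n converges uniformly to the indicator function 1_{(−∞,0)} on ℝ ∖ [−δ, δ]. Let p : ℝ² → ℝ be continuous, and assume that for each x, y ∈ ℝ, E[f_n(X_n − x)·f_n(Y_n − y)] → p(x, y) as n → ∞. Then for each x, y ∈ ℝ, ℙ(X_n ≤ x and Y_n ≤ y) → p(x, y) as n → ∞. -/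
/-!
Write `F n (x, y) = ℙ(X n ≤ x, Y n ≤ y)` and `G n (a, b) = E[f n (X n - a) f n (Y n - b)]`.
Once `f n` is `ε`-close to `1_{(-∞,0)}` off `[-δ, δ]`, the integrand of `G n (x + 2δ, y + 2δ)` is at
least `1 - 2ε` on the event `{X n ≤ x, Y n ≤ y}`, and the integrand of `G n (x - 2δ, y - 2δ)` is at
most `1` on it and at most `ε` off it. Hence
`G n (x - 2δ, y - 2δ) - ε ≤ F n (x, y) ≤ G n (x + 2δ, y + 2δ) + 2ε` for large `n`, and the continuity
of `p` along the diagonal through `(x, y)` squeezes `F n (x, y)` to `p (x, y)`.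
-/

open MeasureTheory Filter Set Topology

lemma eventually_bounds_of_tendstoUniformlyOn_indicator {ι : Type*} {l : Filter ι}
    {f : ι → ℝ → ℝ} {δ ε : ℝ} (hδ : 0 ≤ δ) (hε : 0 < ε)
    (h : TendstoUniformlyOn f ((Iio (0 : ℝ)).indicator fun _ => (1 : ℝ)) l {t | δ < |t|}) :
    ∀ᶠ n in l, (∀ t, δ < t → f n t ≤ ε) ∧ ∀ t, t < -δ → 1 - ε ≤ f n t := by
  filter_upwards [Metric.tendstoUniformlyOn_iff.mp h ε hε] with n hn
  refine ⟨fun t ht => ?_, fun t ht => ?_⟩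
  · have hclose := hn t (show δ < |t| by rwa [abs_of_pos (hδ.trans_lt ht)])
    rw [indicator_of_notMem (by simp only [mem_Iio, not_lt]; linarith), Real.dist_eq] at hclose
    linarith [neg_abs_le (0 - f n t)]
  · have hclose := hn t (show δ < |t| by rw [abs_of_neg (by linarith)]; linarith)
    rw [indicator_of_mem (by simp only [mem_Iio]; linarith), Real.dist_eq] at hclose
    linarith [le_abs_self (1 - f n t)]

section Shifts

variable {φ : ℝ → ℝ} {δ ε u v x y a b : ℝ}

lemma one_sub_two_mul_le_mul_comp_sub (hφ : ∀ t, φ t ∈ Icc (0 : ℝ) 1)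
    (hlarge : ∀ t, t < -δ → 1 - ε ≤ φ t) (ha : x + δ < a) (hb : y + δ < b)
    (hu : u ≤ x) (hv : v ≤ y) :
    1 - 2 * ε ≤ φ (u - a) * φ (v - b) := by
  have hφu := hlarge (u - a) (by linarith)
  have hφv := hlarge (v - b) (by linarith)
  obtain ⟨hφv0, hφv1⟩ := hφ (v - b)
  have hε : 0 ≤ ε := by linarith
  nlinarith [mul_nonneg (sub_nonneg.mpr hφu) hφv0, mul_nonneg hε (sub_nonneg.mpr hφv1)]

lemma mul_comp_sub_le (hφ : ∀ t, φ t ∈ Icc (0 : ℝ) 1) (hsmall : ∀ t, δ < t → φ t ≤ ε)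
    (ha : a + δ ≤ x) (hb : b + δ ≤ y) (huv : ¬(u ≤ x ∧ v ≤ y)) :
    φ (u - a) * φ (v - b) ≤ ε := by
  rcases not_and_or.mp huv with hu | hv
  · exact (mul_le_of_le_one_right (hφ _).1 (hφ _).2).trans (hsmall _ (by linarith [not_le.mp hu]))
  · exact (mul_le_of_le_one_left (hφ _).1 (hφ _).2).trans (hsmall _ (by linarith [not_le.mp hv]))

end Shifts

section Sandwich

variable {Ω : Type*} [MeasurableSpace Ω] {P : Measure Ω}

lemma mul_measureReal_le_integral [IsFiniteMeasure P] {h : Ω → ℝ} {s : Set Ω} {c : ℝ}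
    (hs : MeasurableSet s) (hh : Integrable h P) (h0 : 0 ≤ h) (hc : ∀ ω ∈ s, c ≤ h ω) :
    c * P.real s ≤ ∫ ω, h ω ∂P := by
  calc c * P.real s = P.real s • c := mul_comm _ _
    _ ≤ ∫ ω in s, h ω ∂P := setIntegral_ge_of_const_le hs (measure_ne_top P s) hc hh.integrableOn
    _ ≤ ∫ ω, h ω ∂P := setIntegral_le_integral hh (ae_of_all _ h0)

lemma integral_le_measureReal_add [IsProbabilityMeasure P] {h : Ω → ℝ} {s : Set Ω} {ε : ℝ}
    (hs : MeasurableSet s) (hh : Integrable h P) (hε : 0 ≤ ε)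
    (h1 : ∀ ω ∈ s, h ω ≤ 1) (hsmall : ∀ ω ∉ s, h ω ≤ ε) :
    ∫ ω, h ω ∂P ≤ P.real s + ε := by
  have hbound : ∀ ω, h ω ≤ s.indicator 1 ω + ε := by
    intro ω
    by_cases hω : ω ∈ s
    · simp only [indicator_of_mem hω, Pi.one_apply]; linarith [h1 ω hω]
    · simp only [indicator_of_notMem hω]; linarith [hsmall ω hω]
  calc ∫ ω, h ω ∂P ≤ ∫ ω, (s.indicator 1 ω + ε) ∂P :=
        integral_mono hh ((integrable_const 1).indicator hs |>.add (integrable_const ε)) hbound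
    _ = P.real s + ε := by
        rw [integral_add (f := s.indicator 1) ((integrable_const 1).indicator hs)
            (integrable_const ε),
          integral_indicator_one hs, integral_const, probReal_univ, one_smul]

variable [IsProbabilityMeasure P] {X Y : Ω → ℝ} {φ : ℝ → ℝ}

lemma integrable_mul_comp_sub (hX : Measurable X) (hY : Measurable Y) (hφm : Measurable φ)
    (hφ : ∀ t, φ t ∈ Icc (0 : ℝ) 1) (a b : ℝ) :
    Integrable (fun ω => φ (X ω - a) * φ (Y ω - b)) P := by
  refine Integrable.of_bound ?_ 1 (ae_of_all _ fun ω => ?_)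
  · exact ((hφm.comp (hX.sub_const a)).mul (hφm.comp (hY.sub_const b))).aestronglyMeasurable
  · rw [Real.norm_eq_abs, abs_of_nonneg (mul_nonneg (hφ _).1 (hφ _).1)]
    exact mul_le_one₀ (hφ _).2 (hφ _).1 (hφ _).2

lemma measurableSet_le_and_le (hX : Measurable X) (hY : Measurable Y) (x y : ℝ) :
    MeasurableSet {ω | X ω ≤ x ∧ Y ω ≤ y} :=
  (measurableSet_le hX measurable_const).inter (measurableSet_le hY measurable_const)

variable (hX : Measurable X) (hY : Measurable Y) (hφm : Measurable φ)
  (hφ : ∀ t, φ t ∈ Icc (0 : ℝ) 1) {δ ε x y a b : ℝ}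
include hX hY hφm hφ

lemma measureReal_le_integral_mul_add (hlarge : ∀ t, t < -δ → 1 - ε ≤ φ t) (hε : 0 ≤ ε)
    (ha : x + δ < a) (hb : y + δ < b) :
    P.real {ω | X ω ≤ x ∧ Y ω ≤ y} ≤ ∫ ω, φ (X ω - a) * φ (Y ω - b) ∂P + 2 * ε := by
  have hlower := mul_measureReal_le_integral (measurableSet_le_and_le hX hY x y)
    (integrable_mul_comp_sub (P := P) hX hY hφm hφ a b) (fun _ => mul_nonneg (hφ _).1 (hφ _).1)
    (fun _ hω => one_sub_two_mul_le_mul_comp_sub hφ hlarge ha hb hω.1 hω.2)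
  have hF : P.real {ω | X ω ≤ x ∧ Y ω ≤ y} ≤ 1 := measureReal_le_one
  nlinarith

lemma integral_mul_le_measureReal_add (hsmall : ∀ t, δ < t → φ t ≤ ε) (hε : 0 ≤ ε)
    (ha : a + δ ≤ x) (hb : b + δ ≤ y) :
    ∫ ω, φ (X ω - a) * φ (Y ω - b) ∂P ≤ P.real {ω | X ω ≤ x ∧ Y ω ≤ y} + ε :=
  integral_le_measureReal_add (measurableSet_le_and_le hX hY x y)
    (integrable_mul_comp_sub hX hY hφm hφ a b) hε
    (fun _ _ => mul_le_one₀ (hφ _).2 (hφ _).1 (hφ _).2)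
    (fun _ hω => mul_comp_sub_le hφ hsmall ha hb hω)

end Sandwich

lemma exists_pos_diag_mem_of_continuous {p : ℝ × ℝ → ℝ} (hp : Continuous p) (x y c : ℝ)
    {s : Set ℝ} (hs : s ∈ 𝓝 (p (x, y))) : ∃ δ > 0, p (x + c * δ, y + c * δ) ∈ s := by
  have hcurve : Tendsto (fun δ : ℝ => (x + c * δ, y + c * δ)) (𝓝 0) (𝓝 (x, y)) := by
    simpa using (by fun_prop : Continuous fun δ : ℝ => (x + c * δ, y + c * δ)).tendsto 0
  have hdiag := ((hp.tendsto _).comp hcurve).mono_left (nhdsWithin_le_nhds (s := Ioi 0))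
  obtain ⟨δ, hδs, hδ⟩ := ((hdiag.eventually hs).and self_mem_nhdsWithin).exists
  exact ⟨δ, hδ, hδs⟩

theorem stmt17 {Ω : Type*} [MeasurableSpace Ω] (P : MeasureTheory.Measure Ω)
    [MeasureTheory.IsProbabilityMeasure P]
    (X Y : ℕ → Ω → ℝ) (hX : ∀ n, Measurable (X n)) (hY : ∀ n, Measurable (Y n))
    (f : ℕ → ℝ → ℝ) (hfm : ∀ n, Measurable (f n)) (hf01 : ∀ n x, f n x ∈ Set.Icc (0:ℝ) 1)
    (hunif : ∀ δ > 0, TendstoUniformlyOn f ((Set.Iio (0:ℝ)).indicator fun _ => (1:ℝ))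
      Filter.atTop {y : ℝ | δ < |y|})
    (p : ℝ × ℝ → ℝ) (hp : Continuous p)
    (hE : ∀ x y : ℝ, Filter.Tendsto
      (fun n => ∫ ω, f n (X n ω - x) * f n (Y n ω - y) ∂P) Filter.atTop (nhds (p (x, y)))) :
    ∀ x y : ℝ, Filter.Tendsto (fun n => (P {ω | X n ω ≤ x ∧ Y n ω ≤ y}).toReal)
      Filter.atTop (nhds (p (x, y))) := by
  intro x y
  simp only [← measureReal_def]
  refine tendsto_order.2 ⟨fun c hc => ?_, fun c hc => ?_⟩
  · obtain ⟨δ, hδ, hcδ⟩ := exists_pos_diag_mem_of_continuous hp x y (-2) (Ioi_mem_nhds hc)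
    obtain ⟨ε, hcε, hε⟩ := exists_add_lt_and_pos_of_lt (mem_Ioi.mp hcδ)
    filter_upwards [eventually_bounds_of_tendstoUniformlyOn_indicator hδ.le hε (hunif δ hδ),
      (hE _ _).eventually (Ioi_mem_nhds hcε)] with n hn hEn
    linarith [integral_mul_le_measureReal_add (P := P) (hX n) (hY n) (hfm n) (hf01 n) hn.1 hε.le
      (show x + -2 * δ + δ ≤ x by linarith) (show y + -2 * δ + δ ≤ y by linarith), hEn]
  · obtain ⟨δ, hδ, hcδ⟩ := exists_pos_diag_mem_of_continuous hp x y 2 (Iio_mem_nhds hc)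
    obtain ⟨ε, hcε, hε⟩ := exists_add_lt_and_pos_of_lt (mem_Iio.mp hcδ)
    filter_upwards [eventually_bounds_of_tendstoUniformlyOn_indicator hδ.le (half_pos hε)
      (hunif δ hδ), (hE _ _).eventually (Iio_mem_nhds (lt_sub_iff_add_lt.mpr hcε))] with n hn hEn
    linarith [measureReal_le_integral_mul_add (P := P) (hX n) (hY n) (hfm n) (hf01 n) hn.2
      (half_pos hε).le (show x + δ < x + 2 * δ by linarith) (show y + δ < y + 2 * δ by linarith),
      hEn]
end
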